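/- arXiv:2105.02721 — 7 statements merged into one kernel-verified Lean document; each statement's English description precedes it below -/
import Mathlib

section
/- f(x,y) = 0 for all y ∈ ℝ if and only if x ∈ 𝒳* = {qπ/K : q ∈ ℤ} \ {nπ : n ∈ ℤ}. -/
open MeasureTheory Real Finset

/-- f(x,y) = Σ_{k=0}^{K-1} cos(y - 2kx). -/
noncomputable def fK (K : ℕ) (x y : ℝ) : ℝ :=
  ∑ k ∈ Finset.range K, Real.cos (y - 2 * (k : ℝ) * x)

/-- the hypercube [0, 2π)^L. -/
def cube (L : ℕ) : Set (Fin L → ℝ) := Set.univ.pi fun _ => Set.Ico 0 (2 * Real.pi)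

/-- 𝒳* = {qπ/K : q ∈ ℤ} \ {nπ : n ∈ ℤ}. -/
def Xstar (K : ℕ) : Set ℝ :=
  {r | (∃ q : ℤ, r = (q : ℝ) * Real.pi / K) ∧ ∀ n : ℤ, r ≠ (n : ℝ) * Real.pi}

/-- the representative of a modulo π lying in [0, π). -/
noncomputable def modpi (a : ℝ) : ℝ := a - Real.pi * ⌊a / Real.pi⌋

lemma exp_real_mul_I_eq_one (a : ℝ) :
    Complex.exp ((a : ℝ) * Complex.I) = 1 ↔ ∃ n : ℤ, a = n * (2 * Real.pi) := by
  rw [Complex.exp_eq_one_iff]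
  constructor
  · rintro ⟨n, hn⟩
    refine ⟨n, ?_⟩
    have h2 : (a : ℂ) = (((n : ℝ) * (2 * Real.pi) : ℝ) : ℂ) := by
      apply mul_right_cancel₀ Complex.I_ne_zero
      rw [hn]; push_cast; ring
    exact_mod_cast h2
  · rintro ⟨n, hn⟩
    refine ⟨n, ?_⟩
    rw [hn]; push_cast; ring

theorem stmt1 (K : ℕ) (hK : 1 ≤ K) (x : ℝ) :
    (∀ y : ℝ, fK K x y = 0) ↔ x ∈ Xstar K := by
  have hKR : (K : ℝ) ≠ 0 := Nat.cast_ne_zero.2 (by omega)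
  set z : ℂ := Complex.exp ((2 * x : ℝ) * Complex.I) with hz
  set A : ℝ := ∑ k ∈ Finset.range K, Real.cos (2 * (k : ℝ) * x) with hA
  set B : ℝ := ∑ k ∈ Finset.range K, Real.sin (2 * (k : ℝ) * x) with hB
  have hzk : ∀ k : ℕ, z ^ k = Complex.exp ((2 * (k : ℝ) * x : ℝ) * Complex.I) := by
    intro k
    rw [hz, ← Complex.exp_nat_mul]
    congr 1
    push_cast
    ring
  -- step 1 : f ≡ 0 ↔ A = 0 ∧ B = 0
  have step1 : (∀ y : ℝ, fK K x y = 0) ↔ A = 0 ∧ B = 0 := by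
    constructor
    · intro h
      constructor
      · have h0 := h 0
        simpa [fK, hA, Real.cos_neg] using h0
      · have h1 := h (Real.pi / 2)
        simpa [fK, hB, Real.cos_pi_div_two_sub] using h1
    · rintro ⟨ha, hb⟩ y
      have : ∀ k ∈ Finset.range K, Real.cos (y - 2 * (k : ℝ) * x) =
          Real.cos y * Real.cos (2 * (k : ℝ) * x) +
          Real.sin y * Real.sin (2 * (k : ℝ) * x) := fun k _ => Real.cos_sub _ _
      rw [fK, Finset.sum_congr rfl this, Finset.sum_add_distrib, ← Finset.mul_sum,
        ← Finset.mul_sum, ← hA, ← hB, ha, hb]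
      ring
  -- step 2 : A = 0 ∧ B = 0 ↔ geometric sum is 0
  have step2 : (A = 0 ∧ B = 0) ↔ (∑ k ∈ Finset.range K, z ^ k) = 0 := by
    have hre : (∑ k ∈ Finset.range K, z ^ k).re = A := by
      rw [Complex.re_sum, hA]
      refine Finset.sum_congr rfl fun k _ => ?_
      rw [hzk k, Complex.exp_ofReal_mul_I_re]
    have him : (∑ k ∈ Finset.range K, z ^ k).im = B := by
      rw [Complex.im_sum, hB]
      refine Finset.sum_congr rfl fun k _ => ?_
      rw [hzk k, Complex.exp_ofReal_mul_I_im]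
    rw [Complex.ext_iff, hre, him, Complex.zero_re, Complex.zero_im]
  -- step 3 : geometric sum is 0 ↔ z ^ K = 1 ∧ z ≠ 1
  have step3 : (∑ k ∈ Finset.range K, z ^ k) = 0 ↔ (z ^ K = 1 ∧ z ≠ 1) := by
    constructor
    · intro h
      have hzne : z ≠ 1 := by
        intro h1
        rw [h1] at h
        simp only [one_pow, Finset.sum_const, Finset.card_range, nsmul_eq_mul, mul_one] at h
        exact hKR (by exact_mod_cast h)
      refine ⟨?_, hzne⟩
      have hg := geom_sum_mul z K
      rw [h, zero_mul] at hg
      exact sub_eq_zero.mp hg.symm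
    · rintro ⟨h1, hne⟩
      rw [geom_sum_eq hne, h1, sub_self, zero_div]
  -- step 4 : translate z conditions to x conditions
  have hzK : z ^ K = 1 ↔ ∃ q : ℤ, x = (q : ℝ) * Real.pi / K := by
    rw [hzk K, exp_real_mul_I_eq_one]
    constructor
    · rintro ⟨n, hn⟩
      refine ⟨n, ?_⟩
      field_simp
      linarith
    · rintro ⟨q, hq⟩
      refine ⟨q, ?_⟩
      rw [hq]
      field_simp
  have hz1 : z = 1 ↔ ∃ n : ℤ, x = (n : ℝ) * Real.pi := by
    rw [hz, exp_real_mul_I_eq_one]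
    constructor
    · rintro ⟨n, hn⟩
      exact ⟨n, by linarith⟩
    · rintro ⟨n, hn⟩
      exact ⟨n, by rw [hn]; ring⟩
  rw [step1, step2, step3, hzK]
  constructor
  · rintro ⟨hq, hne⟩
    exact ⟨hq, fun n hx => hne (hz1.mpr ⟨n, hx⟩)⟩
  · rintro ⟨hq, hne⟩
    refine ⟨hq, fun h1 => ?_⟩
    obtain ⟨n, hn⟩ := hz1.mp h1
    exact hne n hn
end

section
/- Let w=(l,i), w'=(r,q) with 0 ≤ l < i ≤ L_r-1 and 0 ≤ r < q ≤ L_r-1, and w ≠ w'. Then ∫_{[0,2π)^{L_r}} f(x₁, C₁ + (y_i - y_l))·f(x₂, C₂ + (y_q - y_r)) dy = 0 for any x₁, x₂, C₁, C₂ ∈ ℝ. -/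
open MeasureTheory Real Finset

noncomputable def sflip (t : ℝ) : ℝ := if t < Real.pi then t + Real.pi else t - Real.pi

lemma sflip_measurable : Measurable sflip := by
  unfold sflip
  exact Measurable.ite (measurableSet_lt measurable_id measurable_const)
    (measurable_id.add_const _) (measurable_id.sub_const _)

lemma sflip_mp :
    MeasurePreserving sflip (volume.restrict (Set.Ico 0 (2 * Real.pi)))
      (volume.restrict (Set.Ico 0 (2 * Real.pi))) := by
  refine ⟨sflip_measurable, ?_⟩
  have hsplit : volume.restrict (Set.Ico (0:ℝ) (2 * Real.pi))
      = volume.restrict (Set.Ico 0 Real.pi) + volume.restrict (Set.Ico Real.pi (2 * Real.pi)) := by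
    rw [← Measure.restrict_union Set.Ico_disjoint_Ico_same measurableSet_Ico,
      Set.Ico_union_Ico_eq_Ico Real.pi_pos.le (by linarith [Real.pi_pos])]
  have h1 : Measure.map sflip (volume.restrict (Set.Ico 0 Real.pi))
      = volume.restrict (Set.Ico Real.pi (2 * Real.pi)) := by
    have hcong : sflip =ᵐ[volume.restrict (Set.Ico 0 Real.pi)] (fun t => t + Real.pi) := by
      filter_upwards [ae_restrict_mem measurableSet_Ico] with t ht
      simp [sflip, ht.2]
    rw [Measure.map_congr hcong]
    have hpre : (fun t : ℝ => t + Real.pi) ⁻¹' Set.Ico Real.pi (2 * Real.pi)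
        = Set.Ico 0 Real.pi := by
      rw [Set.preimage_add_const_Ico]
      norm_num
      ring_nf
    rw [← hpre, ← Measure.restrict_map (measurable_add_const _) measurableSet_Ico,
      (measurePreserving_add_right volume Real.pi).map_eq]
  have h2 : Measure.map sflip (volume.restrict (Set.Ico Real.pi (2 * Real.pi)))
      = volume.restrict (Set.Ico 0 Real.pi) := by
    have hcong : sflip =ᵐ[volume.restrict (Set.Ico Real.pi (2 * Real.pi))]
        (fun t => t - Real.pi) := by
      filter_upwards [ae_restrict_mem measurableSet_Ico] with t ht
      simp [sflip, not_lt.mpr ht.1]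
    rw [Measure.map_congr hcong]
    have hpre : (fun t : ℝ => t - Real.pi) ⁻¹' Set.Ico 0 Real.pi
        = Set.Ico Real.pi (2 * Real.pi) := by
      rw [Set.preimage_sub_const_Ico]
      norm_num
      ring_nf
    rw [← hpre, ← Measure.restrict_map (measurable_sub_const _) measurableSet_Ico,
      (measurePreserving_sub_right volume Real.pi).map_eq]
  rw [hsplit, Measure.map_add _ _ sflip_measurable, h1, h2, add_comm]

lemma restrict_cube (L : ℕ) :
    volume.restrict (cube L)
      = Measure.pi (fun _ : Fin L => volume.restrict (Set.Ico 0 (2 * Real.pi))) := by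
  refine (Measure.pi_eq fun s hs => ?_).symm
  rw [Measure.restrict_apply (MeasurableSet.univ_pi hs)]
  have : Set.pi Set.univ s ∩ cube L = Set.pi Set.univ fun j => s j ∩ Set.Ico 0 (2 * Real.pi) := by
    rw [Set.pi_inter_distrib]
    rfl
  rw [this, volume_pi_pi]
  exact Finset.prod_congr rfl fun j _ => (Measure.restrict_apply (hs j)).symm

lemma integral_flip_zero {L : ℕ} (j : Fin L) (h : (Fin L → ℝ) → ℝ) (hc : Continuous h)
    (hflip : ∀ (y : Fin L → ℝ) (t : ℝ),
      h (Function.update y j (t + Real.pi)) = - h (Function.update y j t)) :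
    ∫ y, h y ∂(Measure.pi fun _ : Fin L => volume.restrict (Set.Ico 0 (2 * Real.pi))) = 0 := by
  set μ := Measure.pi fun _ : Fin L => volume.restrict (Set.Ico (0:ℝ) (2 * Real.pi)) with hμ
  set f : Fin L → ℝ → ℝ := fun k => if k = j then sflip else id with hf
  have hmp : MeasurePreserving (fun (y : Fin L → ℝ) k => f k (y k)) μ μ := by
    apply measurePreserving_pi
    intro k
    by_cases hk : k = j
    · simpa [hf, hk] using sflip_mp
    · simpa [hf, hk] using MeasurePreserving.id _
  have hcomp : ∀ y : Fin L → ℝ, h (fun k => f k (y k)) = - h y := by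
    intro y
    have hupd : (fun k => f k (y k)) = Function.update y j (sflip (y j)) := by
      funext k
      by_cases hk : k = j
      · subst hk; simp [hf]
      · simp [hf, hk, Function.update_apply]
    rw [hupd]
    by_cases hy : y j < Real.pi
    · have hs : sflip (y j) = y j + Real.pi := if_pos hy
      rw [hs, hflip y (y j), Function.update_eq_self]
    · have hs : sflip (y j) = y j - Real.pi := if_neg hy
      have h2 := hflip y (y j - Real.pi)
      rw [sub_add_cancel, Function.update_eq_self] at h2
      rw [hs]
      linarith [h2]
  have hint : ∫ y, h y ∂μ = ∫ y, h (fun k => f k (y k)) ∂μ := by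
    conv_lhs => rw [← hmp.map_eq]
    exact integral_map hmp.measurable.aemeasurable
      (by rw [hmp.map_eq]; exact hc.aestronglyMeasurable)
  have hneg : ∫ y, h y ∂μ = - ∫ y, h y ∂μ := by
    nth_rewrite 1 [hint]
    rw [integral_congr_ae (Filter.Eventually.of_forall hcomp), integral_neg]
  linarith [hneg]

lemma fK_flip (K : ℕ) (x A : ℝ) : fK K x (A + Real.pi) = - fK K x A := by
  unfold fK
  rw [← Finset.sum_neg_distrib]
  refine Finset.sum_congr rfl fun k _ => ?_
  rw [show A + Real.pi - 2 * (k : ℝ) * x = (A - 2 * (k : ℝ) * x) + Real.pi by ring,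
    Real.cos_add_pi]

lemma fK_flip' (K : ℕ) (x A : ℝ) : fK K x (A - Real.pi) = - fK K x A := by
  have h := fK_flip K x (A - Real.pi)
  rw [sub_add_cancel] at h
  linarith [h]

theorem stmt5 (K Lr : ℕ) (hK : 1 ≤ K) (l i r q : Fin Lr)
    (hli : l < i) (hrq : r < q) (hne : (l, i) ≠ (r, q)) (x₁ x₂ C₁ C₂ : ℝ) :
    ∫ y in cube Lr,
      fK K x₁ (C₁ + (y i - y l)) * fK K x₂ (C₂ + (y q - y r)) = 0 := by
  have hcontfK : ∀ (n : ℕ) (x : ℝ), Continuous (fK n x) := by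
    intro n x
    unfold fK
    exact continuous_finset_sum _ fun k _ =>
      Real.continuous_cos.comp (continuous_id.sub continuous_const)
  set h : (Fin Lr → ℝ) → ℝ :=
    fun y => fK K x₁ (C₁ + (y i - y l)) * fK K x₂ (C₂ + (y q - y r)) with hh
  have hc : Continuous h := by
    apply Continuous.mul
    · exact (hcontfK K x₁).comp
        (continuous_const.add ((continuous_apply i).sub (continuous_apply l)))
    · exact (hcontfK K x₂).comp
        (continuous_const.add ((continuous_apply q).sub (continuous_apply r)))
  have hil : i ≠ l := hli.ne'
  have key : ∃ j : Fin Lr, ∀ (y : Fin Lr → ℝ) (t : ℝ),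
      h (Function.update y j (t + Real.pi)) = - h (Function.update y j t) := by
    have hcase : (l ≠ r ∧ l ≠ q) ∨ (i ≠ r ∧ i ≠ q) := by
      by_contra hcon
      push_neg at hcon
      obtain ⟨h1, h2⟩ := hcon
      by_cases hlr : l = r
      · subst hlr
        by_cases hiq : i = q
        · exact hne (by rw [hiq])
        · have hir : i = l := by
            by_contra hir
            exact hiq (h2 hir)
          exact hil hir
      · have hlq : l = q := h1 hlr
        subst hlq
        by_cases hir : i = r
        · subst hir
          exact absurd hli (not_lt.mpr hrq.le)
        · exact hil (h2 hir)
    rcases hcase with ⟨hlr, hlq⟩ | ⟨hir, hiq⟩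
    · refine ⟨l, fun y t => ?_⟩
      have e : ∀ v, h (Function.update y l v)
          = fK K x₁ (C₁ + (y i - v)) * fK K x₂ (C₂ + (y q - y r)) := by
        intro v
        simp [hh, Function.update_apply, hil, hlq.symm, hlr.symm]
      rw [e, e, show C₁ + (y i - (t + Real.pi)) = (C₁ + (y i - t)) - Real.pi by ring,
        fK_flip', neg_mul]
    · refine ⟨i, fun y t => ?_⟩
      have e : ∀ v, h (Function.update y i v)
          = fK K x₁ (C₁ + (v - y l)) * fK K x₂ (C₂ + (y q - y r)) := by
        intro v
        simp [hh, Function.update_apply, hli.ne, hiq.symm, hir.symm]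
      rw [e, e, show C₁ + (t + Real.pi - y l) = (C₁ + (t - y l)) + Real.pi by ring,
        fK_flip, neg_mul]
  obtain ⟨j, hflip⟩ := key
  show ∫ y, h y ∂(volume.restrict (cube Lr)) = 0
  rw [restrict_cube]
  exact integral_flip_zero j h hc hflip
end

section
/- Let 𝒳* = {qπ/K : q ∈ ℤ} \ {nπ : n ∈ ℤ} and let D_X = {Δx_{l,i}, Δz_{m,j}, Δx_{l,i} ± Δz_{m,j} : 0≤l<i≤L_r-1, 0≤m<j≤L_s-1} (with obvious degenerate forms when L_r=1 or L_s=1). If D_X ⊂ 𝒳*, then the function J_a(x,z,y,v) = Σ_w c_w f(Δx_w, Δy_w) + Σ_p d_p f(Δz_p, Δv_p) + Σ_{w,p} (c'_w d'_p/2)[f(Δx_w+Δz_p, Δy_w+Δv_p) + f(Δx_w-Δz_p, Δy_w-Δv_p)] is identically zero in (y,v) ∈ [0,2π)^{L_r}×[0,2π)^{L_s}. -/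
open MeasureTheory Real Finset

/-- the set of ordered index pairs (first strictly less than second). -/
def pairs (L : ℕ) : Finset (Fin L × Fin L) := Finset.univ.filter fun p => p.1 < p.2

/-- the function J_a from eq. (25)/(eq:J:wp:compact). -/
noncomputable def Ja (K Lr Ls : ℕ) (c c' : Fin Lr × Fin Lr → ℝ) (d d' : Fin Ls × Fin Ls → ℝ)
    (x : Fin Lr → ℝ) (z : Fin Ls → ℝ) (y : Fin Lr → ℝ) (v : Fin Ls → ℝ) : ℝ :=
  (∑ w ∈ pairs Lr, c w * fK K (x w.2 - x w.1) (y w.2 - y w.1)) +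
  (∑ p ∈ pairs Ls, d p * fK K (z p.2 - z p.1) (v p.2 - v p.1)) +
  ∑ w ∈ pairs Lr, ∑ p ∈ pairs Ls, (c' w * d' p / 2) *
    (fK K ((x w.2 - x w.1) + (z p.2 - z p.1)) ((y w.2 - y w.1) + (v p.2 - v p.1)) +
     fK K ((x w.2 - x w.1) - (z p.2 - z p.1)) ((y w.2 - y w.1) - (v p.2 - v p.1)))

/-- D_X ⊂ 𝒳*: all phase-slope differences Δx_w, Δz_p, Δx_w ± Δz_p lie in 𝒳*. -/
def DXsub (K Lr Ls : ℕ) (x : Fin Lr → ℝ) (z : Fin Ls → ℝ) : Prop :=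
  (∀ w ∈ pairs Lr, x w.2 - x w.1 ∈ Xstar K) ∧
  (∀ p ∈ pairs Ls, z p.2 - z p.1 ∈ Xstar K) ∧
  (∀ w ∈ pairs Lr, ∀ p ∈ pairs Ls,
    (x w.2 - x w.1) + (z p.2 - z p.1) ∈ Xstar K ∧
    (x w.2 - x w.1) - (z p.2 - z p.1) ∈ Xstar K)

/- Each `fK K δ` occurring in `Ja` vanishes identically. It is a sum of cosines in arithmetic
progression with step `a = -2δ`, and `sin (a/2) · Σ cos (a i + b) = sin (K a/2) · cos (…)`;
here `sin (a/2) = -sin δ ≠ 0` because `δ ∉ πℤ`, while `sin (K a/2) = -sin (Kδ) = 0` because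
`Kδ ∈ πℤ`. -/

theorem Real.sum_range_cos_eq_zero {n : ℕ} {a : ℝ} (ha : sin (a / 2) ≠ 0)
    (hna : sin (n * a / 2) = 0) (b : ℝ) : ∑ i ∈ range n, cos (a * i + b) = 0 := by
  have h := sin_mul_sum_cos n a b
  rw [hna, zero_mul] at h
  exact (mul_eq_zero.mp h).resolve_left ha

lemma sin_ne_zero_of_mem_Xstar {K : ℕ} {δ : ℝ} (hδ : δ ∈ Xstar K) : sin δ ≠ 0 := by
  rw [Ne, sin_eq_zero_iff, not_exists]
  exact fun n hn => hδ.2 n hn.symm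

lemma sin_natCast_mul_eq_zero_of_mem_Xstar {K : ℕ} {δ : ℝ} (hδ : δ ∈ Xstar K) :
    sin (K * δ) = 0 := by
  obtain ⟨⟨q, rfl⟩, -⟩ := hδ
  rcases eq_or_ne (K : ℝ) 0 with hK | hK
  · simp [hK]
  · rw [mul_div_cancel₀ _ hK, sin_int_mul_pi]

lemma fK_eq_zero_of_mem_Xstar {K : ℕ} {δ : ℝ} (hδ : δ ∈ Xstar K) (y : ℝ) : fK K δ y = 0 := by
  have hterm (k : ℕ) : cos (y - 2 * k * δ) = cos (-(2 * δ) * k + y) := by ring_nf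
  simp only [fK, hterm]
  refine Real.sum_range_cos_eq_zero ?_ ?_ y
  · rw [neg_div, mul_div_cancel_left₀ δ two_ne_zero, sin_neg, neg_ne_zero]
    exact sin_ne_zero_of_mem_Xstar hδ
  · rw [mul_neg, neg_div, mul_left_comm, mul_div_cancel_left₀ _ two_ne_zero, sin_neg,
      sin_natCast_mul_eq_zero_of_mem_Xstar hδ, neg_zero]

theorem stmt9_general (K Lr Ls : ℕ)
    (c c' : Fin Lr × Fin Lr → ℝ) (d d' : Fin Ls × Fin Ls → ℝ)
    (x : Fin Lr → ℝ) (z : Fin Ls → ℝ) (hDX : DXsub K Lr Ls x z) :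
    ∀ y ∈ cube Lr, ∀ v ∈ cube Ls, Ja K Lr Ls c c' d d' x z y v = 0 := by
  obtain ⟨hx, hz, hxz⟩ := hDX
  intro y _ v _
  have hcx : ∀ w ∈ pairs Lr, c w * fK K (x w.2 - x w.1) (y w.2 - y w.1) = 0 := fun w hw => by
    rw [fK_eq_zero_of_mem_Xstar (hx w hw), mul_zero]
  have hdz : ∀ p ∈ pairs Ls, d p * fK K (z p.2 - z p.1) (v p.2 - v p.1) = 0 := fun p hp => by
    rw [fK_eq_zero_of_mem_Xstar (hz p hp), mul_zero]
  rw [Ja, sum_eq_zero hcx, sum_eq_zero hdz, zero_add, zero_add]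
  refine sum_eq_zero fun w hw => sum_eq_zero fun p hp => ?_
  rw [fK_eq_zero_of_mem_Xstar (hxz w hw p hp).1, fK_eq_zero_of_mem_Xstar (hxz w hw p hp).2,
    add_zero, mul_zero]

theorem stmt9 (K Lr Ls : ℕ) (hK : 1 ≤ K) (hLr : 1 ≤ Lr) (hLs : 1 ≤ Ls)
    (c c' : Fin Lr × Fin Lr → ℝ) (d d' : Fin Ls × Fin Ls → ℝ)
    (hc : ∀ w, 0 ≤ c w) (hc' : ∀ w, 0 ≤ c' w) (hd : ∀ p, 0 ≤ d p) (hd' : ∀ p, 0 ≤ d' p)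
    (x : Fin Lr → ℝ) (z : Fin Ls → ℝ) (hDX : DXsub K Lr Ls x z) :
    ∀ y ∈ cube Lr, ∀ v ∈ cube Ls, Ja K Lr Ls c c' d d' x z y v = 0 :=
  stmt9_general K Lr Ls c c' d d' x z hDX
end

section
/- With the notation of the previous item, assume additionally that all coefficients c_w, c'_w, d_p, d'_p are strictly positive. If J_a(x,z,y,v) = 0 for all (y,v) ∈ [0,2π)^{L_r}×[0,2π)^{L_s}, then D_X ⊂ 𝒳*. -/
open MeasureTheory Real Finset

namespace Stmt10Aux

noncomputable def eps (t : ℝ) : ℂ := Complex.exp (t * Complex.I)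

lemma eps_mul (a b : ℝ) : eps a * eps b = eps (a + b) := by
  rw [eps, eps, eps, ← Complex.exp_add]
  congr 1
  push_cast
  ring

lemma eps_zero : eps 0 = 1 := by simp [eps]

lemma eps_nat_mul (n : ℕ) (t : ℝ) : eps (n * t) = eps t ^ n := by
  rw [eps, eps, ← Complex.exp_nat_mul]
  congr 1
  push_cast
  ring

lemma cosC (t : ℝ) : (Real.cos t : ℂ) = (eps t + eps (-t)) / 2 := by
  rw [Complex.ofReal_cos, eps, eps]
  rw [Complex.cos]
  push_cast
  ring_nf

lemma S3 (μ : ℤ) (h : ¬ (3:ℤ) ∣ μ) :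
    ∑ a : Fin 3, eps ((μ:ℝ) * (2 * Real.pi / 3 * (a:ℝ))) = 0 := by
  set ω : ℂ := eps ((μ:ℝ) * (2 * Real.pi / 3)) with hω
  have hterm : ∀ a : Fin 3, eps ((μ:ℝ) * (2 * Real.pi / 3 * (a:ℝ))) = ω ^ (a:ℕ) := by
    intro a
    rw [hω, ← eps_nat_mul]
    congr 1
    ring
  rw [Finset.sum_congr rfl (fun a _ => hterm a), Fin.sum_univ_three]
  have h3 : ω ^ 3 = 1 := by
    rw [hω, eps, ← Complex.exp_nat_mul]
    rw [show ((3:ℕ):ℂ) * (((μ:ℝ) * (2 * Real.pi / 3) : ℝ) * Complex.I) = (μ:ℤ) * (2 * Real.pi * Complex.I) by push_cast; ring]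
    exact Complex.exp_int_mul_two_pi_mul_I μ
  have h1 : ω ≠ 1 := by
    rw [hω, eps]
    intro hcon
    rw [Complex.exp_eq_one_iff] at hcon
    obtain ⟨n, hn⟩ := hcon
    rw [show ((n:ℂ) * (2 * Real.pi * Complex.I)) = (((n:ℝ) * (2*Real.pi) : ℝ) : ℂ) * Complex.I by push_cast; ring] at hn
    have h2 := mul_right_cancel₀ Complex.I_ne_zero hn
    have h3 : (μ:ℝ) * (2 * Real.pi / 3) = (n:ℝ) * (2 * Real.pi) := by exact_mod_cast h2
    have hpi := Real.pi_ne_zero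
    have hpip : (0:ℝ) < Real.pi := Real.pi_pos
    have : (μ:ℝ) = 3 * n := by
      have h4 : ((μ:ℝ) - 3 * n) * (2 * Real.pi / 3) = 0 := by linarith
      rcases mul_eq_zero.1 h4 with h5 | h5
      · linarith
      · exfalso; nlinarith
    have : μ = 3 * n := by exact_mod_cast this
    exact h (⟨n, this⟩)
  have hfac : (ω - 1) * (1 + ω + ω^2) = 0 := by
    have : (ω - 1) * (1 + ω + ω^2) = ω^3 - 1 := by ring
    rw [this, h3, sub_self]
  rcases mul_eq_zero.1 hfac with h | h
  · exact absurd (sub_eq_zero.1 h) h1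
  · simp only [Fin.val_zero, Fin.val_one, Fin.val_two, pow_zero, pow_one]
    linear_combination h


noncomputable def gr3 {L : ℕ} (m : Fin L → Fin 3) (j : Fin L) : ℝ := 2 * Real.pi / 3 * ((m j : ℕ) : ℝ)

lemma grid_sum {L : ℕ} (μ : Fin L → ℤ) (h : ∀ j, μ j = 0 ∨ ¬ (3:ℤ) ∣ μ j) :
    ∑ m : Fin L → Fin 3, eps (∑ j, (μ j : ℝ) * gr3 m j)
      = if ∀ j, μ j = 0 then (3:ℂ)^L else 0 := by
  have h1 : ∀ m : Fin L → Fin 3, eps (∑ j, (μ j : ℝ) * gr3 m j)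
      = ∏ j, eps ((μ j : ℝ) * (2 * Real.pi / 3 * ((m j : ℕ) : ℝ))) := by
    intro m
    rw [eps, show ((∑ j, (μ j : ℝ) * gr3 m j : ℝ) : ℂ) * Complex.I
        = ∑ j, (((μ j : ℝ) * gr3 m j : ℝ) : ℂ) * Complex.I by push_cast; rw [Finset.sum_mul]]
    rw [Complex.exp_sum]
    rfl
  rw [Finset.sum_congr rfl (fun m _ => h1 m)]
  rw [← Fintype.prod_sum (fun j (a : Fin 3) => eps ((μ j : ℝ) * (2 * Real.pi / 3 * ((a : ℕ) : ℝ))))]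
  by_cases hz : ∀ j, μ j = 0
  · rw [if_pos hz]
    have : ∀ j : Fin L, (∑ a : Fin 3, eps ((μ j : ℝ) * (2 * Real.pi / 3 * ((a : ℕ) : ℝ)))) = 3 := by
      intro j
      rw [hz j]
      simp [eps_zero]
    rw [Finset.prod_congr rfl (fun j _ => this j)]
    simp
  · rw [if_neg hz]
    push_neg at hz
    obtain ⟨j0, hj0⟩ := hz
    refine Finset.prod_eq_zero (Finset.mem_univ j0) ?_
    exact S3 (μ j0) ((h j0).resolve_left hj0)


def dvec {L : ℕ} (a b : Fin L) : Fin L → ℤ :=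
  fun j => (if j = a then 1 else 0) - (if j = b then 1 else 0)

lemma dotR {L : ℕ} (a b : Fin L) (t : Fin L → ℝ) :
    ∑ j, ((dvec a b j : ℤ) : ℝ) * t j = t a - t b := by
  have h : ∀ j, ((dvec a b j : ℤ) : ℝ) * t j
      = (if j = a then t j else 0) - (if j = b then t j else 0) := by
    intro j; simp only [dvec]; split_ifs <;> push_cast <;> ring
  rw [Finset.sum_congr rfl (fun j _ => h j), Finset.sum_sub_distrib,
    Finset.sum_ite_eq' univ a t, Finset.sum_ite_eq' univ b t]
  simp

lemma dvec_small {L : ℕ} (a b : Fin L) (j : Fin L) : dvec a b j = 0 ∨ dvec a b j = 1 ∨ dvec a b j = -1 := by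
  simp only [dvec]; split_ifs <;> omega

lemma dvec_eq_one {L : ℕ} {a b j : Fin L} (hab : a ≠ b) (h : j = a) : dvec a b j = 1 := by
  subst h; simp [dvec, hab]

lemma dvec_eq_negone {L : ℕ} {a b j : Fin L} (hab : a ≠ b) (h : j = b) : dvec a b j = -1 := by
  subst h; simp [dvec, fun hh : j = a => hab hh.symm]
  intro hh; exact absurd hh.symm hab

lemma eq_of_dvec_one {L : ℕ} {a b j : Fin L} (h : dvec a b j = 1) : j = a ∧ j ≠ b := by
  by_cases h1 : j = a <;> by_cases h2 : j = b <;> simp only [dvec, h1, h2, if_pos, if_neg] at h ⊢ <;>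
    first | exact ⟨h1, h2⟩ | (exfalso; simp [h1, h2] at h; omega) | simp_all

lemma eq_of_dvec_negone {L : ℕ} {a b j : Fin L} (h : dvec a b j = -1) : j = b ∧ j ≠ a := by
  by_cases h1 : j = a <;> by_cases h2 : j = b <;> simp only [dvec, h1, h2] at h ⊢ <;> simp_all


lemma pair_sum {L : ℕ} (s1 s2 : ℤ) (hs1 : s1 = 1 ∨ s1 = -1) (hs2 : s2 = 1 ∨ s2 = -1)
    (a b e f : Fin L) :
    ∑ m : Fin L → Fin 3, eps ((s1:ℝ) * (gr3 m a - gr3 m b) + (s2:ℝ) * (gr3 m e - gr3 m f))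
      = if (∀ j, s1 * dvec a b j + s2 * dvec e f j = 0) then (3:ℂ)^L else 0 := by
  have harg : ∀ m : Fin L → Fin 3,
      (s1:ℝ) * (gr3 m a - gr3 m b) + (s2:ℝ) * (gr3 m e - gr3 m f)
        = ∑ j, (((s1 * dvec a b j + s2 * dvec e f j : ℤ)):ℝ) * gr3 m j := by
    intro m
    have : ∀ j : Fin L, (((s1 * dvec a b j + s2 * dvec e f j : ℤ)):ℝ) * gr3 m j
        = (s1:ℝ) * (((dvec a b j : ℤ):ℝ) * gr3 m j) + (s2:ℝ) * (((dvec e f j : ℤ):ℝ) * gr3 m j) := by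
      intro j; push_cast; ring
    rw [Finset.sum_congr rfl (fun j _ => this j), Finset.sum_add_distrib,
      ← Finset.mul_sum, ← Finset.mul_sum, dotR, dotR]
  rw [Finset.sum_congr rfl (fun m _ => congrArg eps (harg m))]
  apply grid_sum
  intro j
  rcases dvec_small a b j with h|h|h <;> rcases dvec_small e f j with h'|h'|h' <;>
    rcases hs1 with rfl|rfl <;> rcases hs2 with rfl|rfl <;> rw [h, h'] <;> omega

lemma single_sum {L : ℕ} (s1 : ℤ) (hs1 : s1 = 1 ∨ s1 = -1) (a b : Fin L) (hab : a ≠ b) :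
    ∑ m : Fin L → Fin 3, eps ((s1:ℝ) * (gr3 m a - gr3 m b)) = 0 := by
  have harg : ∀ m : Fin L → Fin 3,
      (s1:ℝ) * (gr3 m a - gr3 m b) = ∑ j, (((s1 * dvec a b j : ℤ)):ℝ) * gr3 m j := by
    intro m
    have : ∀ j : Fin L, (((s1 * dvec a b j : ℤ)):ℝ) * gr3 m j
        = (s1:ℝ) * (((dvec a b j : ℤ):ℝ) * gr3 m j) := by intro j; push_cast; ring
    rw [Finset.sum_congr rfl (fun j _ => this j), ← Finset.mul_sum, dotR]
  rw [Finset.sum_congr rfl (fun m _ => congrArg eps (harg m))]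
  rw [grid_sum _ (fun j => by rcases dvec_small a b j with h|h|h <;> rcases hs1 with rfl|rfl <;> rw [h] <;> omega)]
  rw [if_neg]
  intro hall
  have := hall a
  rw [dvec_eq_one hab rfl] at this
  rcases hs1 with rfl|rfl <;> omega

section atoms
variable {L : ℕ} (a b e f : Fin L)

lemma cond_iff (hba : b < a) (hfe : f < e) :
    (∀ j, dvec a b j - dvec e f j = 0) ↔ (a = e ∧ b = f) := by
  constructor
  · intro hall
    have hab : a ≠ b := Fin.ne_of_gt hba
    have hef : e ≠ f := Fin.ne_of_gt hfe
    have h1 := hall a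
    rw [dvec_eq_one hab rfl] at h1
    have h2 := hall b
    rw [dvec_eq_negone hab rfl] at h2
    have e1 := eq_of_dvec_one (show dvec e f a = 1 by omega)
    have e2 := eq_of_dvec_negone (show dvec e f b = -1 by omega)
    exact ⟨e1.1, e2.1⟩
  · rintro ⟨rfl, rfl⟩
    intro j; ring

lemma cond_neg (hba : b < a) (hfe : f < e) :
    ¬ (∀ j, dvec a b j + dvec e f j = 0) := by
  intro hall
  have hab : a ≠ b := Fin.ne_of_gt hba
  have hef : e ≠ f := Fin.ne_of_gt hfe
  have h1 := hall a
  rw [dvec_eq_one hab rfl] at h1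
  have h2 := hall b
  rw [dvec_eq_negone hab rfl] at h2
  have e1 := (eq_of_dvec_negone (show dvec e f a = -1 by omega)).1
  have e2 := (eq_of_dvec_one (show dvec e f b = 1 by omega)).1
  -- a = f, b = e
  rw [← e1] at hfe
  rw [← e2] at hfe
  exact absurd hba (Fin.lt_asymm hfe)

lemma A1 (hba : b < a) (hfe : f < e) :
    ∑ m : Fin L → Fin 3, eps (gr3 m a - gr3 m b) * eps (-(gr3 m e - gr3 m f))
      = if a = e ∧ b = f then (3:ℂ)^L else 0 := by
  calc ∑ m : Fin L → Fin 3, eps (gr3 m a - gr3 m b) * eps (-(gr3 m e - gr3 m f))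
      = ∑ m : Fin L → Fin 3, eps ((((1:ℤ)):ℝ) * (gr3 m a - gr3 m b) + ((((-1):ℤ)):ℝ) * (gr3 m e - gr3 m f)) :=
        Finset.sum_congr rfl (fun m _ => by rw [eps_mul]; exact congrArg eps (by push_cast; ring))
    _ = if (∀ j, 1 * dvec a b j + (-1) * dvec e f j = 0) then (3:ℂ)^L else 0 :=
        pair_sum 1 (-1) (Or.inl rfl) (Or.inr rfl) a b e f
    _ = if a = e ∧ b = f then (3:ℂ)^L else 0 := by
        have hiff : (∀ j, 1 * dvec a b j + (-1) * dvec e f j = 0) ↔ (a = e ∧ b = f) := by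
          rw [show (∀ j, 1 * dvec a b j + (-1) * dvec e f j = 0) ↔ (∀ j, dvec a b j - dvec e f j = 0) from
            ⟨fun h j => by have := h j; omega, fun h j => by have := h j; omega⟩]
          exact cond_iff a b e f hba hfe
        simp only [hiff]

lemma A3 (hba : b < a) (hfe : f < e) :
    ∑ m : Fin L → Fin 3, eps (-(gr3 m a - gr3 m b)) * eps (gr3 m e - gr3 m f)
      = if a = e ∧ b = f then (3:ℂ)^L else 0 := by
  calc ∑ m : Fin L → Fin 3, eps (-(gr3 m a - gr3 m b)) * eps (gr3 m e - gr3 m f)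
      = ∑ m : Fin L → Fin 3, eps (((((-1):ℤ)):ℝ) * (gr3 m a - gr3 m b) + (((1:ℤ)):ℝ) * (gr3 m e - gr3 m f)) :=
        Finset.sum_congr rfl (fun m _ => by rw [eps_mul]; exact congrArg eps (by push_cast; ring))
    _ = if (∀ j, (-1) * dvec a b j + 1 * dvec e f j = 0) then (3:ℂ)^L else 0 :=
        pair_sum (-1) 1 (Or.inr rfl) (Or.inl rfl) a b e f
    _ = if a = e ∧ b = f then (3:ℂ)^L else 0 := by
        have hiff : (∀ j, (-1) * dvec a b j + 1 * dvec e f j = 0) ↔ (a = e ∧ b = f) := by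
          rw [show (∀ j, (-1) * dvec a b j + 1 * dvec e f j = 0) ↔ (∀ j, dvec a b j - dvec e f j = 0) from
            ⟨fun h j => by have := h j; omega, fun h j => by have := h j; omega⟩]
          exact cond_iff a b e f hba hfe
        simp only [hiff]

lemma A2 (hba : b < a) (hfe : f < e) :
    ∑ m : Fin L → Fin 3, eps (-(gr3 m a - gr3 m b)) * eps (-(gr3 m e - gr3 m f)) = 0 := by
  calc ∑ m : Fin L → Fin 3, eps (-(gr3 m a - gr3 m b)) * eps (-(gr3 m e - gr3 m f))
      = ∑ m : Fin L → Fin 3, eps (((((-1):ℤ)):ℝ) * (gr3 m a - gr3 m b) + ((((-1):ℤ)):ℝ) * (gr3 m e - gr3 m f)) :=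
        Finset.sum_congr rfl (fun m _ => by rw [eps_mul]; exact congrArg eps (by push_cast; ring))
    _ = if (∀ j, (-1) * dvec a b j + (-1) * dvec e f j = 0) then (3:ℂ)^L else 0 :=
        pair_sum (-1) (-1) (Or.inr rfl) (Or.inr rfl) a b e f
    _ = 0 := by
        rw [if_neg]
        intro hall
        exact cond_neg a b e f hba hfe (fun j => by have := hall j; omega)

lemma A4 (hba : b < a) (hfe : f < e) :
    ∑ m : Fin L → Fin 3, eps (gr3 m a - gr3 m b) * eps (gr3 m e - gr3 m f) = 0 := by
  calc ∑ m : Fin L → Fin 3, eps (gr3 m a - gr3 m b) * eps (gr3 m e - gr3 m f)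
      = ∑ m : Fin L → Fin 3, eps ((((1:ℤ)):ℝ) * (gr3 m a - gr3 m b) + (((1:ℤ)):ℝ) * (gr3 m e - gr3 m f)) :=
        Finset.sum_congr rfl (fun m _ => by rw [eps_mul]; exact congrArg eps (by push_cast; ring))
    _ = if (∀ j, 1 * dvec a b j + 1 * dvec e f j = 0) then (3:ℂ)^L else 0 :=
        pair_sum 1 1 (Or.inl rfl) (Or.inl rfl) a b e f
    _ = 0 := by
        rw [if_neg]
        intro hall
        exact cond_neg a b e f hba hfe (fun j => by have := hall j; omega)

lemma A5 (hab : a ≠ b) : ∑ m : Fin L → Fin 3, eps (gr3 m a - gr3 m b) = 0 := by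
  calc ∑ m : Fin L → Fin 3, eps (gr3 m a - gr3 m b)
      = ∑ m : Fin L → Fin 3, eps ((((1:ℤ)):ℝ) * (gr3 m a - gr3 m b)) :=
        Finset.sum_congr rfl (fun m _ => congrArg eps (by push_cast; ring))
    _ = 0 := single_sum 1 (Or.inl rfl) a b hab

lemma A6 (hab : a ≠ b) : ∑ m : Fin L → Fin 3, eps (-(gr3 m a - gr3 m b)) = 0 := by
  calc ∑ m : Fin L → Fin 3, eps (-(gr3 m a - gr3 m b))
      = ∑ m : Fin L → Fin 3, eps (((((-1):ℤ)):ℝ) * (gr3 m a - gr3 m b)) :=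
        Finset.sum_congr rfl (fun m _ => congrArg eps (by push_cast; ring))
    _ = 0 := single_sum (-1) (Or.inr rfl) a b hab

lemma A7 : ∑ _m : Fin L → Fin 3, (1:ℂ) = (3:ℂ)^L := by
  rw [Finset.sum_const, Finset.card_univ]
  simp [Fintype.card_fun]

end atoms

/-- splitting a double sum of cosines against a product phase. -/
lemma cos_double_sum {α β : Type*} [Fintype α] [Fintype β]
    (A : α → ℝ) (B : β → ℝ) (θ : ℝ) (φ1 : α → ℂ) (φ2 : β → ℂ) :
    ∑ m : α, ∑ n : β, ((Real.cos (A m + B n - θ) : ℝ) : ℂ) * (φ1 m * φ2 n)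
      = (eps (-θ) * ((∑ m : α, eps (A m) * φ1 m) * (∑ n : β, eps (B n) * φ2 n))
        + eps θ * ((∑ m : α, eps (-(A m)) * φ1 m) * (∑ n : β, eps (-(B n)) * φ2 n))) / 2 := by
  have hpt : ∀ (m : α) (n : β),
      ((Real.cos (A m + B n - θ) : ℝ) : ℂ) * (φ1 m * φ2 n)
        = (eps (-θ) * ((eps (A m) * φ1 m) * (eps (B n) * φ2 n))
          + eps θ * ((eps (-(A m)) * φ1 m) * (eps (-(B n)) * φ2 n))) / 2 := by
    intro m n
    rw [cosC]
    rw [show eps (-θ) * ((eps (A m) * φ1 m) * (eps (B n) * φ2 n))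
        = (eps (-θ) * eps (A m) * eps (B n)) * (φ1 m * φ2 n) from by ring]
    rw [show eps θ * ((eps (-(A m)) * φ1 m) * (eps (-(B n)) * φ2 n))
        = (eps θ * eps (-(A m)) * eps (-(B n))) * (φ1 m * φ2 n) from by ring]
    rw [eps_mul, eps_mul, eps_mul, eps_mul]
    rw [show (-θ + A m + B n) = A m + B n - θ from by ring]
    rw [show (θ + -(A m) + -(B n)) = -(A m + B n - θ) from by ring]
    ring
  rw [Finset.sum_congr rfl (fun m _ => Finset.sum_congr rfl (fun n _ => hpt m n))]
  rw [Finset.sum_mul_sum, Finset.sum_mul_sum]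
  simp only [Finset.mul_sum, ← Finset.sum_add_distrib, Finset.sum_div]


lemma geom_eps (K : ℕ) (hK : 1 ≤ K) (X : ℝ)
    (h : ∑ k ∈ Finset.range K, eps (-(2 * (k:ℝ) * X)) = 0) : X ∈ Xstar K := by
  set ω : ℂ := eps (-(2 * X)) with hω
  have hterm : ∀ k : ℕ, eps (-(2 * (k:ℝ) * X)) = ω ^ k := by
    intro k
    rw [hω, ← eps_nat_mul]
    exact congrArg eps (by ring)
  rw [Finset.sum_congr rfl (fun k _ => hterm k)] at h
  have hω1 : ω ≠ 1 := by
    intro hcon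
    rw [Finset.sum_congr rfl (fun k _ => by rw [hcon, one_pow])] at h
    rw [Finset.sum_const, Finset.card_range, nsmul_eq_mul, mul_one] at h
    have : (K:ℂ) ≠ 0 := Nat.cast_ne_zero.2 (by omega)
    exact this h
  rw [geom_sum_eq hω1 K] at h
  have hnum : ω ^ K = 1 := by
    rcases div_eq_zero_iff.1 h with h' | h'
    · exact sub_eq_zero.1 h'
    · exact absurd (sub_eq_zero.1 h') hω1
  have h1 : eps (-(2 * (K:ℝ) * X)) = 1 := by
    rw [show (-(2 * (K:ℝ) * X)) = (K:ℝ) * (-(2 * X)) from by ring, eps_nat_mul]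
    exact hnum
  rw [eps, Complex.exp_eq_one_iff] at h1
  obtain ⟨n, hn⟩ := h1
  rw [show ((n:ℂ) * (2 * (Real.pi:ℂ) * Complex.I)) = (((n:ℝ) * (2 * Real.pi) : ℝ):ℂ) * Complex.I from by
    push_cast; ring] at hn
  have hr : (-(2 * (K:ℝ) * X)) = (n:ℝ) * (2 * Real.pi) := by
    exact_mod_cast mul_right_cancel₀ Complex.I_ne_zero hn
  have hKr : ((K:ℝ)) ≠ 0 := Nat.cast_ne_zero.2 (by omega)
  constructor
  · refine ⟨-n, ?_⟩
    push_cast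
    field_simp
    linarith
  · intro nn hEq
    apply hω1
    rw [hω, hEq, eps, show (((-(2 * ((nn:ℝ) * Real.pi)) : ℝ)):ℂ) * Complex.I
        = (((-nn : ℤ)):ℂ) * (2 * (Real.pi:ℂ) * Complex.I) from by push_cast; ring]
    exact Complex.exp_int_mul_two_pi_mul_I (-nn)


lemma fK_shift (K : ℕ) (X Y : ℝ) (n : ℤ) : fK K X (Y + (n:ℝ) * (2 * Real.pi)) = fK K X Y := by
  unfold fK
  refine Finset.sum_congr rfl (fun k _ => ?_)
  rw [show Y + (n:ℝ) * (2 * Real.pi) - 2 * (k:ℝ) * X = (Y - 2 * (k:ℝ) * X) + (n:ℝ) * (2 * Real.pi) from by ring]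
  exact Real.cos_add_int_mul_two_pi _ n

lemma reduce_mem (L : ℕ) (y : Fin L → ℝ) :
    (fun j => y j - (⌊y j / (2 * Real.pi)⌋ : ℝ) * (2 * Real.pi)) ∈ cube L := by
  intro j _
  have h2π : (0:ℝ) < 2 * Real.pi := by positivity
  have hrw : y j - (⌊y j / (2 * Real.pi)⌋ : ℝ) * (2 * Real.pi)
      = Int.fract (y j / (2 * Real.pi)) * (2 * Real.pi) := by
    rw [Int.fract]
    field_simp
  refine ⟨?_, ?_⟩
  · show 0 ≤ y j - (⌊y j / (2 * Real.pi)⌋ : ℝ) * (2 * Real.pi)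
    rw [hrw]
    exact mul_nonneg (Int.fract_nonneg _) h2π.le
  · show y j - (⌊y j / (2 * Real.pi)⌋ : ℝ) * (2 * Real.pi) < 2 * Real.pi
    rw [hrw]
    calc Int.fract (y j / (2 * Real.pi)) * (2 * Real.pi) < 1 * (2 * Real.pi) :=
          mul_lt_mul_of_pos_right (Int.fract_lt_one _) h2π
      _ = 2 * Real.pi := one_mul _

lemma Ja_all (K Lr Ls : ℕ) (c c' : Fin Lr × Fin Lr → ℝ) (d d' : Fin Ls × Fin Ls → ℝ)
    (x : Fin Lr → ℝ) (z : Fin Ls → ℝ)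
    (hJ : ∀ y ∈ cube Lr, ∀ v ∈ cube Ls, Ja K Lr Ls c c' d d' x z y v = 0) :
    ∀ y v, Ja K Lr Ls c c' d d' x z y v = 0 := by
  intro y v
  set ny : Fin Lr → ℤ := fun j => ⌊y j / (2 * Real.pi)⌋ with hny
  set nv : Fin Ls → ℤ := fun j => ⌊v j / (2 * Real.pi)⌋ with hnv
  set y' : Fin Lr → ℝ := fun j => y j - (ny j : ℝ) * (2 * Real.pi) with hy'
  set v' : Fin Ls → ℝ := fun j => v j - (nv j : ℝ) * (2 * Real.pi) with hv'
  have h0 := hJ y' (reduce_mem Lr y) v' (reduce_mem Ls v)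
  have e1 : (∑ w ∈ pairs Lr, c w * fK K (x w.2 - x w.1) (y w.2 - y w.1))
      = ∑ w ∈ pairs Lr, c w * fK K (x w.2 - x w.1) (y' w.2 - y' w.1) := by
    refine Finset.sum_congr rfl (fun w _ => ?_)
    congr 1
    rw [show y w.2 - y w.1 = (y' w.2 - y' w.1) + ((ny w.2 - ny w.1 : ℤ):ℝ) * (2 * Real.pi) from by
      rw [hy']; push_cast; ring]
    exact (fK_shift _ _ _ _)
  have e2 : (∑ p ∈ pairs Ls, d p * fK K (z p.2 - z p.1) (v p.2 - v p.1))
      = ∑ p ∈ pairs Ls, d p * fK K (z p.2 - z p.1) (v' p.2 - v' p.1) := by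
    refine Finset.sum_congr rfl (fun p _ => ?_)
    congr 1
    rw [show v p.2 - v p.1 = (v' p.2 - v' p.1) + ((nv p.2 - nv p.1 : ℤ):ℝ) * (2 * Real.pi) from by
      rw [hv']; push_cast; ring]
    exact (fK_shift _ _ _ _)
  have e3 : (∑ w ∈ pairs Lr, ∑ p ∈ pairs Ls, (c' w * d' p / 2) *
      (fK K ((x w.2 - x w.1) + (z p.2 - z p.1)) ((y w.2 - y w.1) + (v p.2 - v p.1)) +
       fK K ((x w.2 - x w.1) - (z p.2 - z p.1)) ((y w.2 - y w.1) - (v p.2 - v p.1))))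
      = ∑ w ∈ pairs Lr, ∑ p ∈ pairs Ls, (c' w * d' p / 2) *
      (fK K ((x w.2 - x w.1) + (z p.2 - z p.1)) ((y' w.2 - y' w.1) + (v' p.2 - v' p.1)) +
       fK K ((x w.2 - x w.1) - (z p.2 - z p.1)) ((y' w.2 - y' w.1) - (v' p.2 - v' p.1))) := by
    refine Finset.sum_congr rfl (fun w _ => Finset.sum_congr rfl (fun p _ => ?_))
    congr 1
    congr 1
    · rw [show (y w.2 - y w.1) + (v p.2 - v p.1)
          = ((y' w.2 - y' w.1) + (v' p.2 - v' p.1)) + ((ny w.2 - ny w.1 + nv p.2 - nv p.1 : ℤ):ℝ) * (2 * Real.pi) from by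
        rw [hy', hv']; push_cast; ring]
      exact (fK_shift _ _ _ _)
    · rw [show (y w.2 - y w.1) - (v p.2 - v p.1)
          = ((y' w.2 - y' w.1) - (v' p.2 - v' p.1)) + ((ny w.2 - ny w.1 - nv p.2 + nv p.1 : ℤ):ℝ) * (2 * Real.pi) from by
        rw [hy', hv']; push_cast; ring]
      exact (fK_shift _ _ _ _)
  rw [Ja, e1, e2, e3]
  rw [Ja] at h0
  exact h0


lemma swapA {ι α β : Type*} [Fintype α] [Fintype β] (s : Finset ι) (f : ι → α → β → ℂ) :
    ∑ m : α, ∑ n : β, ∑ w ∈ s, f w m n = ∑ w ∈ s, ∑ m : α, ∑ n : β, f w m n := by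
  calc ∑ m : α, ∑ n : β, ∑ w ∈ s, f w m n
      = ∑ m : α, ∑ w ∈ s, ∑ n : β, f w m n :=
        Finset.sum_congr rfl (fun m _ => Finset.sum_comm)
    _ = ∑ w ∈ s, ∑ m : α, ∑ n : β, f w m n := Finset.sum_comm

section main
variable (K Lr Ls : ℕ) (c c' : Fin Lr × Fin Lr → ℝ) (d d' : Fin Ls × Fin Ls → ℝ)
    (x : Fin Lr → ℝ) (z : Fin Ls → ℝ) (φ1 : (Fin Lr → Fin 3) → ℂ) (φ2 : (Fin Ls → Fin 3) → ℂ)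

lemma S_eq :
    ∑ m : Fin Lr → Fin 3, ∑ n : Fin Ls → Fin 3,
        ((Ja K Lr Ls c c' d d' x z (gr3 m) (gr3 n) : ℝ) : ℂ) * (φ1 m * φ2 n)
    = (∑ w ∈ pairs Lr, ∑ k ∈ Finset.range K,
        ((c w : ℝ):ℂ) *
        ((eps (-(2 * (k:ℝ) * (x w.2 - x w.1)))
            * ((∑ m : Fin Lr → Fin 3, eps (gr3 m w.2 - gr3 m w.1) * φ1 m) * (∑ n : Fin Ls → Fin 3, φ2 n))
          + eps (2 * (k:ℝ) * (x w.2 - x w.1))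
            * ((∑ m : Fin Lr → Fin 3, eps (-(gr3 m w.2 - gr3 m w.1)) * φ1 m) * (∑ n : Fin Ls → Fin 3, φ2 n))) / 2))
    + (∑ p ∈ pairs Ls, ∑ k ∈ Finset.range K,
        ((d p : ℝ):ℂ) *
        ((eps (-(2 * (k:ℝ) * (z p.2 - z p.1)))
            * ((∑ m : Fin Lr → Fin 3, φ1 m) * (∑ n : Fin Ls → Fin 3, eps (gr3 n p.2 - gr3 n p.1) * φ2 n))
          + eps (2 * (k:ℝ) * (z p.2 - z p.1))
            * ((∑ m : Fin Lr → Fin 3, φ1 m) * (∑ n : Fin Ls → Fin 3, eps (-(gr3 n p.2 - gr3 n p.1)) * φ2 n))) / 2))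
    + ((∑ w ∈ pairs Lr, ∑ p ∈ pairs Ls, ∑ k ∈ Finset.range K,
        ((c' w * d' p / 2 : ℝ) : ℂ) *
        ((eps (-(2 * (k:ℝ) * ((x w.2 - x w.1) + (z p.2 - z p.1))))
            * ((∑ m : Fin Lr → Fin 3, eps (gr3 m w.2 - gr3 m w.1) * φ1 m)
              * (∑ n : Fin Ls → Fin 3, eps (gr3 n p.2 - gr3 n p.1) * φ2 n))
          + eps (2 * (k:ℝ) * ((x w.2 - x w.1) + (z p.2 - z p.1)))
            * ((∑ m : Fin Lr → Fin 3, eps (-(gr3 m w.2 - gr3 m w.1)) * φ1 m)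
              * (∑ n : Fin Ls → Fin 3, eps (-(gr3 n p.2 - gr3 n p.1)) * φ2 n))) / 2))
      + (∑ w ∈ pairs Lr, ∑ p ∈ pairs Ls, ∑ k ∈ Finset.range K,
        ((c' w * d' p / 2 : ℝ) : ℂ) *
        ((eps (-(2 * (k:ℝ) * ((x w.2 - x w.1) - (z p.2 - z p.1))))
            * ((∑ m : Fin Lr → Fin 3, eps (gr3 m w.2 - gr3 m w.1) * φ1 m)
              * (∑ n : Fin Ls → Fin 3, eps (-(gr3 n p.2 - gr3 n p.1)) * φ2 n))
          + eps (2 * (k:ℝ) * ((x w.2 - x w.1) - (z p.2 - z p.1)))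
            * ((∑ m : Fin Lr → Fin 3, eps (-(gr3 m w.2 - gr3 m w.1)) * φ1 m)
              * (∑ n : Fin Ls → Fin 3, eps (gr3 n p.2 - gr3 n p.1) * φ2 n))) / 2))) := by
  have hpoint : ∀ (m : Fin Lr → Fin 3) (n : Fin Ls → Fin 3),
      ((Ja K Lr Ls c c' d d' x z (gr3 m) (gr3 n) : ℝ) : ℂ) * (φ1 m * φ2 n)
      = (∑ w ∈ pairs Lr, ∑ k ∈ Finset.range K,
          ((c w : ℝ):ℂ) * (((Real.cos ((gr3 m w.2 - gr3 m w.1) - 2 * (k:ℝ) * (x w.2 - x w.1)) : ℝ):ℂ)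
            * (φ1 m * φ2 n)))
      + (∑ p ∈ pairs Ls, ∑ k ∈ Finset.range K,
          ((d p : ℝ):ℂ) * (((Real.cos ((gr3 n p.2 - gr3 n p.1) - 2 * (k:ℝ) * (z p.2 - z p.1)) : ℝ):ℂ)
            * (φ1 m * φ2 n)))
      + ((∑ w ∈ pairs Lr, ∑ p ∈ pairs Ls, ∑ k ∈ Finset.range K,
          ((c' w * d' p / 2 : ℝ):ℂ) * (((Real.cos (((gr3 m w.2 - gr3 m w.1) + (gr3 n p.2 - gr3 n p.1))
              - 2 * (k:ℝ) * ((x w.2 - x w.1) + (z p.2 - z p.1))) : ℝ):ℂ) * (φ1 m * φ2 n)))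
        + (∑ w ∈ pairs Lr, ∑ p ∈ pairs Ls, ∑ k ∈ Finset.range K,
          ((c' w * d' p / 2 : ℝ):ℂ) * (((Real.cos (((gr3 m w.2 - gr3 m w.1) - (gr3 n p.2 - gr3 n p.1))
              - 2 * (k:ℝ) * ((x w.2 - x w.1) - (z p.2 - z p.1))) : ℝ):ℂ) * (φ1 m * φ2 n)))) := by
    intro m n
    rw [Ja]
    simp only [fK]
    push_cast
    simp only [add_mul, mul_add, Finset.sum_mul, Finset.mul_sum, mul_assoc, ← Finset.sum_add_distrib]
  rw [Finset.sum_congr rfl (fun m _ => Finset.sum_congr rfl (fun n _ => hpoint m n))]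
  simp only [Finset.sum_add_distrib]
  refine congrArg₂ (· + ·) (congrArg₂ (· + ·) ?_ ?_) (congrArg₂ (· + ·) ?_ ?_)
  · rw [swapA]
    refine Finset.sum_congr rfl (fun w _ => ?_)
    rw [swapA]
    refine Finset.sum_congr rfl (fun k _ => ?_)
    rw [Finset.sum_congr rfl (fun m _ => (Finset.mul_sum _ _ _).symm), ← Finset.mul_sum]
    congr 1
    have h := cos_double_sum (fun m : Fin Lr → Fin 3 => gr3 m w.2 - gr3 m w.1)
      (fun _ : Fin Ls → Fin 3 => (0:ℝ)) (2 * (k:ℝ) * (x w.2 - x w.1)) φ1 φ2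
    simp only [add_zero, neg_zero, eps_zero, one_mul] at h
    exact h
  · rw [swapA]
    refine Finset.sum_congr rfl (fun p _ => ?_)
    rw [swapA]
    refine Finset.sum_congr rfl (fun k _ => ?_)
    rw [Finset.sum_congr rfl (fun m _ => (Finset.mul_sum _ _ _).symm), ← Finset.mul_sum]
    congr 1
    have h := cos_double_sum (fun _ : Fin Lr → Fin 3 => (0:ℝ))
      (fun n : Fin Ls → Fin 3 => gr3 n p.2 - gr3 n p.1) (2 * (k:ℝ) * (z p.2 - z p.1)) φ1 φ2
    simp only [zero_add, neg_zero, eps_zero, one_mul] at h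
    exact h
  · rw [swapA]
    refine Finset.sum_congr rfl (fun w _ => ?_)
    rw [swapA]
    refine Finset.sum_congr rfl (fun p _ => ?_)
    rw [swapA]
    refine Finset.sum_congr rfl (fun k _ => ?_)
    rw [Finset.sum_congr rfl (fun m _ => (Finset.mul_sum _ _ _).symm), ← Finset.mul_sum]
    congr 1
    exact cos_double_sum (fun m : Fin Lr → Fin 3 => gr3 m w.2 - gr3 m w.1)
      (fun n : Fin Ls → Fin 3 => gr3 n p.2 - gr3 n p.1)
      (2 * (k:ℝ) * ((x w.2 - x w.1) + (z p.2 - z p.1))) φ1 φ2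
  · rw [swapA]
    refine Finset.sum_congr rfl (fun w _ => ?_)
    rw [swapA]
    refine Finset.sum_congr rfl (fun p _ => ?_)
    rw [swapA]
    refine Finset.sum_congr rfl (fun k _ => ?_)
    rw [Finset.sum_congr rfl (fun m _ => (Finset.mul_sum _ _ _).symm), ← Finset.mul_sum]
    congr 1
    have h := cos_double_sum (fun m : Fin Lr → Fin 3 => gr3 m w.2 - gr3 m w.1)
      (fun n : Fin Ls → Fin 3 => -(gr3 n p.2 - gr3 n p.1))
      (2 * (k:ℝ) * ((x w.2 - x w.1) - (z p.2 - z p.1))) φ1 φ2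
    simp only [neg_neg] at h
    rw [Finset.sum_congr rfl (fun m _ => Finset.sum_congr rfl (fun n _ => by
      rw [show ((gr3 m w.2 - gr3 m w.1) - (gr3 n p.2 - gr3 n p.1))
            - 2 * (k:ℝ) * ((x w.2 - x w.1) - (z p.2 - z p.1))
          = (gr3 m w.2 - gr3 m w.1) + -(gr3 n p.2 - gr3 n p.1)
            - 2 * (k:ℝ) * ((x w.2 - x w.1) - (z p.2 - z p.1)) from by ring]))]
    exact h


lemma case1 (hK : 1 ≤ K)
    (hc : ∀ w ∈ pairs Lr, 0 < c w)
    (hJall : ∀ y v, Ja K Lr Ls c c' d d' x z y v = 0)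
    (w0 : Fin Lr × Fin Lr) (hw0 : w0 ∈ pairs Lr) :
    x w0.2 - x w0.1 ∈ Xstar K := by
  have hw0lt : w0.1 < w0.2 := (Finset.mem_filter.1 hw0).2
  have hw0ne : w0.2 ≠ w0.1 := Fin.ne_of_gt hw0lt
  have hS := S_eq K Lr Ls c c' d d' x z
    (fun m => eps (-(gr3 m w0.2 - gr3 m w0.1))) (fun _ => (1:ℂ))
  simp only [hJall, Complex.ofReal_zero, zero_mul, Finset.sum_const_zero, mul_one] at hS
  -- kill group 2
  have e2 : (∑ p ∈ pairs Ls, ∑ k ∈ Finset.range K,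
      ((d p : ℝ):ℂ) *
      ((eps (-(2 * (k:ℝ) * (z p.2 - z p.1)))
          * ((∑ m : Fin Lr → Fin 3, eps (-(gr3 m w0.2 - gr3 m w0.1)))
            * (∑ n : Fin Ls → Fin 3, eps (gr3 n p.2 - gr3 n p.1)))
        + eps (2 * (k:ℝ) * (z p.2 - z p.1))
          * ((∑ m : Fin Lr → Fin 3, eps (-(gr3 m w0.2 - gr3 m w0.1)))
            * (∑ n : Fin Ls → Fin 3, eps (-(gr3 n p.2 - gr3 n p.1))))) / 2)) = 0 := by
    refine Finset.sum_eq_zero (fun p _ => Finset.sum_eq_zero (fun k _ => ?_))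
    rw [A6 w0.2 w0.1 hw0ne]
    simp
  have e3a : (∑ w ∈ pairs Lr, ∑ p ∈ pairs Ls, ∑ k ∈ Finset.range K,
      ((c' w * d' p / 2 : ℝ) : ℂ) *
      ((eps (-(2 * (k:ℝ) * ((x w.2 - x w.1) + (z p.2 - z p.1))))
          * ((∑ m : Fin Lr → Fin 3, eps (gr3 m w.2 - gr3 m w.1) * eps (-(gr3 m w0.2 - gr3 m w0.1)))
            * (∑ n : Fin Ls → Fin 3, eps (gr3 n p.2 - gr3 n p.1)))
        + eps (2 * (k:ℝ) * ((x w.2 - x w.1) + (z p.2 - z p.1)))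
          * ((∑ m : Fin Lr → Fin 3, eps (-(gr3 m w.2 - gr3 m w.1)) * eps (-(gr3 m w0.2 - gr3 m w0.1)))
            * (∑ n : Fin Ls → Fin 3, eps (-(gr3 n p.2 - gr3 n p.1))))) / 2)) = 0 := by
    refine Finset.sum_eq_zero (fun w _ => Finset.sum_eq_zero (fun p hp => Finset.sum_eq_zero (fun k _ => ?_)))
    have hplt : p.1 < p.2 := (Finset.mem_filter.1 hp).2
    rw [A5 p.2 p.1 (Fin.ne_of_gt hplt), A6 p.2 p.1 (Fin.ne_of_gt hplt)]
    simp
  have e3b : (∑ w ∈ pairs Lr, ∑ p ∈ pairs Ls, ∑ k ∈ Finset.range K,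
      ((c' w * d' p / 2 : ℝ) : ℂ) *
      ((eps (-(2 * (k:ℝ) * ((x w.2 - x w.1) - (z p.2 - z p.1))))
          * ((∑ m : Fin Lr → Fin 3, eps (gr3 m w.2 - gr3 m w.1) * eps (-(gr3 m w0.2 - gr3 m w0.1)))
            * (∑ n : Fin Ls → Fin 3, eps (-(gr3 n p.2 - gr3 n p.1))))
        + eps (2 * (k:ℝ) * ((x w.2 - x w.1) - (z p.2 - z p.1)))
          * ((∑ m : Fin Lr → Fin 3, eps (-(gr3 m w.2 - gr3 m w.1)) * eps (-(gr3 m w0.2 - gr3 m w0.1)))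
            * (∑ n : Fin Ls → Fin 3, eps (gr3 n p.2 - gr3 n p.1)))) / 2)) = 0 := by
    refine Finset.sum_eq_zero (fun w _ => Finset.sum_eq_zero (fun p hp => Finset.sum_eq_zero (fun k _ => ?_)))
    have hplt : p.1 < p.2 := (Finset.mem_filter.1 hp).2
    rw [A5 p.2 p.1 (Fin.ne_of_gt hplt), A6 p.2 p.1 (Fin.ne_of_gt hplt)]
    simp
  have hvan : ∀ w ∈ pairs Lr, w ≠ w0 → (∑ k ∈ Finset.range K,
      ((c w : ℝ):ℂ) *
      ((eps (-(2 * (k:ℝ) * (x w.2 - x w.1)))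
          * ((∑ m : Fin Lr → Fin 3, eps (gr3 m w.2 - gr3 m w.1) * eps (-(gr3 m w0.2 - gr3 m w0.1)))
            * (∑ _n : Fin Ls → Fin 3, (1:ℂ)))
        + eps (2 * (k:ℝ) * (x w.2 - x w.1))
          * ((∑ m : Fin Lr → Fin 3, eps (-(gr3 m w.2 - gr3 m w.1)) * eps (-(gr3 m w0.2 - gr3 m w0.1)))
            * (∑ _n : Fin Ls → Fin 3, (1:ℂ)))) / 2)) = 0 := by
    intro w hw hne
    have hwlt : w.1 < w.2 := (Finset.mem_filter.1 hw).2
    refine Finset.sum_eq_zero (fun k _ => ?_)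
    rw [A1 w.2 w.1 w0.2 w0.1 hwlt hw0lt, A2 w.2 w.1 w0.2 w0.1 hwlt hw0lt,
      if_neg (fun hcon => hne (Prod.ext hcon.2 hcon.1))]
    simp
  rw [Finset.sum_eq_single_of_mem w0 hw0 hvan, e2, e3a, e3b] at hS
  rw [A1 w0.2 w0.1 w0.2 w0.1 hw0lt hw0lt, A2 w0.2 w0.1 w0.2 w0.1 hw0lt hw0lt,
    if_pos ⟨rfl, rfl⟩, A7] at hS
  simp only [add_zero, zero_add, zero_mul, mul_zero] at hS
  -- hS : 0 = ∑ k, ↑(c w0) * (eps (-(2k X0)) * (3^Lr * 3^Ls) / 2)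
  have key : ((c w0 : ℝ):ℂ) * ((3:ℂ)^Lr * (3:ℂ)^Ls) / 2
      * (∑ k ∈ Finset.range K, eps (-(2 * (k:ℝ) * (x w0.2 - x w0.1)))) = 0 := by
    have hrw : ((c w0 : ℝ):ℂ) * ((3:ℂ)^Lr * (3:ℂ)^Ls) / 2
        * (∑ k ∈ Finset.range K, eps (-(2 * (k:ℝ) * (x w0.2 - x w0.1))))
        = ∑ k ∈ Finset.range K, ((c w0 : ℝ):ℂ)
            * (eps (-(2 * (k:ℝ) * (x w0.2 - x w0.1))) * ((3:ℂ)^Lr * (3:ℂ)^Ls) / 2) := by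
      rw [Finset.mul_sum]
      exact Finset.sum_congr rfl (fun k _ => by ring)
    rw [hrw]
    exact hS.symm
  have hconst : ((c w0 : ℝ):ℂ) * ((3:ℂ)^Lr * (3:ℂ)^Ls) / 2 ≠ 0 := by
    apply div_ne_zero
    · exact mul_ne_zero (Complex.ofReal_ne_zero.2 (ne_of_gt (hc w0 hw0)))
        (mul_ne_zero (pow_ne_zero _ (by norm_num)) (pow_ne_zero _ (by norm_num)))
    · norm_num
  have hsum0 : ∑ k ∈ Finset.range K, eps (-(2 * (k:ℝ) * (x w0.2 - x w0.1))) = 0 := by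
    rcases mul_eq_zero.1 key with h | h
    · exact absurd h hconst
    · exact h
  exact geom_eps K hK _ hsum0

lemma case2 (hK : 1 ≤ K)
    (hd : ∀ p ∈ pairs Ls, 0 < d p)
    (hJall : ∀ y v, Ja K Lr Ls c c' d d' x z y v = 0)
    (p0 : Fin Ls × Fin Ls) (hp0 : p0 ∈ pairs Ls) :
    z p0.2 - z p0.1 ∈ Xstar K := by
  have hp0lt : p0.1 < p0.2 := (Finset.mem_filter.1 hp0).2
  have hp0ne : p0.2 ≠ p0.1 := Fin.ne_of_gt hp0lt
  have hS := S_eq K Lr Ls c c' d d' x z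
    (fun _ => (1:ℂ)) (fun n => eps (-(gr3 n p0.2 - gr3 n p0.1)))
  simp only [hJall, Complex.ofReal_zero, zero_mul, Finset.sum_const_zero, mul_one] at hS
  have e1 : (∑ w ∈ pairs Lr, ∑ k ∈ Finset.range K,
      ((c w : ℝ):ℂ) *
      ((eps (-(2 * (k:ℝ) * (x w.2 - x w.1)))
          * ((∑ m : Fin Lr → Fin 3, eps (gr3 m w.2 - gr3 m w.1))
            * (∑ n : Fin Ls → Fin 3, eps (-(gr3 n p0.2 - gr3 n p0.1))))
        + eps (2 * (k:ℝ) * (x w.2 - x w.1))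
          * ((∑ m : Fin Lr → Fin 3, eps (-(gr3 m w.2 - gr3 m w.1)))
            * (∑ n : Fin Ls → Fin 3, eps (-(gr3 n p0.2 - gr3 n p0.1))))) / 2)) = 0 := by
    refine Finset.sum_eq_zero (fun w hw => Finset.sum_eq_zero (fun k _ => ?_))
    have hwlt : w.1 < w.2 := (Finset.mem_filter.1 hw).2
    rw [A5 w.2 w.1 (Fin.ne_of_gt hwlt), A6 w.2 w.1 (Fin.ne_of_gt hwlt)]
    simp
  have e3a : (∑ w ∈ pairs Lr, ∑ p ∈ pairs Ls, ∑ k ∈ Finset.range K,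
      ((c' w * d' p / 2 : ℝ) : ℂ) *
      ((eps (-(2 * (k:ℝ) * ((x w.2 - x w.1) + (z p.2 - z p.1))))
          * ((∑ m : Fin Lr → Fin 3, eps (gr3 m w.2 - gr3 m w.1))
            * (∑ n : Fin Ls → Fin 3, eps (gr3 n p.2 - gr3 n p.1) * eps (-(gr3 n p0.2 - gr3 n p0.1))))
        + eps (2 * (k:ℝ) * ((x w.2 - x w.1) + (z p.2 - z p.1)))
          * ((∑ m : Fin Lr → Fin 3, eps (-(gr3 m w.2 - gr3 m w.1)))
            * (∑ n : Fin Ls → Fin 3, eps (-(gr3 n p.2 - gr3 n p.1)) * eps (-(gr3 n p0.2 - gr3 n p0.1))))) / 2)) = 0 := by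
    refine Finset.sum_eq_zero (fun w hw => Finset.sum_eq_zero (fun p _ => Finset.sum_eq_zero (fun k _ => ?_)))
    have hwlt : w.1 < w.2 := (Finset.mem_filter.1 hw).2
    rw [A5 w.2 w.1 (Fin.ne_of_gt hwlt), A6 w.2 w.1 (Fin.ne_of_gt hwlt)]
    simp
  have e3b : (∑ w ∈ pairs Lr, ∑ p ∈ pairs Ls, ∑ k ∈ Finset.range K,
      ((c' w * d' p / 2 : ℝ) : ℂ) *
      ((eps (-(2 * (k:ℝ) * ((x w.2 - x w.1) - (z p.2 - z p.1))))
          * ((∑ m : Fin Lr → Fin 3, eps (gr3 m w.2 - gr3 m w.1))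
            * (∑ n : Fin Ls → Fin 3, eps (-(gr3 n p.2 - gr3 n p.1)) * eps (-(gr3 n p0.2 - gr3 n p0.1))))
        + eps (2 * (k:ℝ) * ((x w.2 - x w.1) - (z p.2 - z p.1)))
          * ((∑ m : Fin Lr → Fin 3, eps (-(gr3 m w.2 - gr3 m w.1)))
            * (∑ n : Fin Ls → Fin 3, eps (gr3 n p.2 - gr3 n p.1) * eps (-(gr3 n p0.2 - gr3 n p0.1))))) / 2)) = 0 := by
    refine Finset.sum_eq_zero (fun w hw => Finset.sum_eq_zero (fun p _ => Finset.sum_eq_zero (fun k _ => ?_)))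
    have hwlt : w.1 < w.2 := (Finset.mem_filter.1 hw).2
    rw [A5 w.2 w.1 (Fin.ne_of_gt hwlt), A6 w.2 w.1 (Fin.ne_of_gt hwlt)]
    simp
  have hvan : ∀ p ∈ pairs Ls, p ≠ p0 → (∑ k ∈ Finset.range K,
      ((d p : ℝ):ℂ) *
      ((eps (-(2 * (k:ℝ) * (z p.2 - z p.1)))
          * ((∑ _m : Fin Lr → Fin 3, (1:ℂ))
            * (∑ n : Fin Ls → Fin 3, eps (gr3 n p.2 - gr3 n p.1) * eps (-(gr3 n p0.2 - gr3 n p0.1))))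
        + eps (2 * (k:ℝ) * (z p.2 - z p.1))
          * ((∑ _m : Fin Lr → Fin 3, (1:ℂ))
            * (∑ n : Fin Ls → Fin 3, eps (-(gr3 n p.2 - gr3 n p.1)) * eps (-(gr3 n p0.2 - gr3 n p0.1))))) / 2)) = 0 := by
    intro p hp hne
    have hplt : p.1 < p.2 := (Finset.mem_filter.1 hp).2
    refine Finset.sum_eq_zero (fun k _ => ?_)
    rw [A1 p.2 p.1 p0.2 p0.1 hplt hp0lt, A2 p.2 p.1 p0.2 p0.1 hplt hp0lt,
      if_neg (fun hcon => hne (Prod.ext hcon.2 hcon.1))]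
    simp
  rw [e1, Finset.sum_eq_single_of_mem p0 hp0 hvan, e3a, e3b] at hS
  rw [A1 p0.2 p0.1 p0.2 p0.1 hp0lt hp0lt, A2 p0.2 p0.1 p0.2 p0.1 hp0lt hp0lt,
    if_pos ⟨rfl, rfl⟩, A7] at hS
  simp only [add_zero, zero_add, zero_mul, mul_zero] at hS
  have key : ((d p0 : ℝ):ℂ) * ((3:ℂ)^Lr * (3:ℂ)^Ls) / 2
      * (∑ k ∈ Finset.range K, eps (-(2 * (k:ℝ) * (z p0.2 - z p0.1)))) = 0 := by
    have hrw : ((d p0 : ℝ):ℂ) * ((3:ℂ)^Lr * (3:ℂ)^Ls) / 2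
        * (∑ k ∈ Finset.range K, eps (-(2 * (k:ℝ) * (z p0.2 - z p0.1))))
        = ∑ k ∈ Finset.range K, ((d p0 : ℝ):ℂ)
            * (eps (-(2 * (k:ℝ) * (z p0.2 - z p0.1))) * ((3:ℂ)^Lr * (3:ℂ)^Ls) / 2) := by
      rw [Finset.mul_sum]
      exact Finset.sum_congr rfl (fun k _ => by ring)
    rw [hrw]
    exact hS.symm
  have hconst : ((d p0 : ℝ):ℂ) * ((3:ℂ)^Lr * (3:ℂ)^Ls) / 2 ≠ 0 := by
    apply div_ne_zero
    · exact mul_ne_zero (Complex.ofReal_ne_zero.2 (ne_of_gt (hd p0 hp0)))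
        (mul_ne_zero (pow_ne_zero _ (by norm_num)) (pow_ne_zero _ (by norm_num)))
    · norm_num
  have hsum0 : ∑ k ∈ Finset.range K, eps (-(2 * (k:ℝ) * (z p0.2 - z p0.1))) = 0 := by
    rcases mul_eq_zero.1 key with h | h
    · exact absurd h hconst
    · exact h
  exact geom_eps K hK _ hsum0

lemma case3p (hK : 1 ≤ K)
    (hc' : ∀ w ∈ pairs Lr, 0 < c' w) (hd' : ∀ p ∈ pairs Ls, 0 < d' p)
    (hJall : ∀ y v, Ja K Lr Ls c c' d d' x z y v = 0)
    (w0 : Fin Lr × Fin Lr) (hw0 : w0 ∈ pairs Lr)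
    (p0 : Fin Ls × Fin Ls) (hp0 : p0 ∈ pairs Ls) :
    (x w0.2 - x w0.1) + (z p0.2 - z p0.1) ∈ Xstar K := by
  have hw0lt : w0.1 < w0.2 := (Finset.mem_filter.1 hw0).2
  have hp0lt : p0.1 < p0.2 := (Finset.mem_filter.1 hp0).2
  have hS := S_eq K Lr Ls c c' d d' x z
    (fun m => eps (-(gr3 m w0.2 - gr3 m w0.1))) (fun n => eps (-(gr3 n p0.2 - gr3 n p0.1)))
  simp only [hJall, Complex.ofReal_zero, zero_mul, Finset.sum_const_zero] at hS
  have e1 : (∑ w ∈ pairs Lr, ∑ k ∈ Finset.range K,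
      ((c w : ℝ):ℂ) *
      ((eps (-(2 * (k:ℝ) * (x w.2 - x w.1)))
          * ((∑ m : Fin Lr → Fin 3, eps (gr3 m w.2 - gr3 m w.1) * eps (-(gr3 m w0.2 - gr3 m w0.1)))
            * (∑ n : Fin Ls → Fin 3, eps (-(gr3 n p0.2 - gr3 n p0.1))))
        + eps (2 * (k:ℝ) * (x w.2 - x w.1))
          * ((∑ m : Fin Lr → Fin 3, eps (-(gr3 m w.2 - gr3 m w.1)) * eps (-(gr3 m w0.2 - gr3 m w0.1)))
            * (∑ n : Fin Ls → Fin 3, eps (-(gr3 n p0.2 - gr3 n p0.1))))) / 2)) = 0 := by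
    refine Finset.sum_eq_zero (fun w _ => Finset.sum_eq_zero (fun k _ => ?_))
    rw [A6 p0.2 p0.1 (Fin.ne_of_gt hp0lt)]
    simp
  have e2 : (∑ p ∈ pairs Ls, ∑ k ∈ Finset.range K,
      ((d p : ℝ):ℂ) *
      ((eps (-(2 * (k:ℝ) * (z p.2 - z p.1)))
          * ((∑ m : Fin Lr → Fin 3, eps (-(gr3 m w0.2 - gr3 m w0.1)))
            * (∑ n : Fin Ls → Fin 3, eps (gr3 n p.2 - gr3 n p.1) * eps (-(gr3 n p0.2 - gr3 n p0.1))))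
        + eps (2 * (k:ℝ) * (z p.2 - z p.1))
          * ((∑ m : Fin Lr → Fin 3, eps (-(gr3 m w0.2 - gr3 m w0.1)))
            * (∑ n : Fin Ls → Fin 3, eps (-(gr3 n p.2 - gr3 n p.1)) * eps (-(gr3 n p0.2 - gr3 n p0.1))))) / 2)) = 0 := by
    refine Finset.sum_eq_zero (fun p _ => Finset.sum_eq_zero (fun k _ => ?_))
    rw [A6 w0.2 w0.1 (Fin.ne_of_gt hw0lt)]
    simp
  have e3b : (∑ w ∈ pairs Lr, ∑ p ∈ pairs Ls, ∑ k ∈ Finset.range K,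
      ((c' w * d' p / 2 : ℝ) : ℂ) *
      ((eps (-(2 * (k:ℝ) * ((x w.2 - x w.1) - (z p.2 - z p.1))))
          * ((∑ m : Fin Lr → Fin 3, eps (gr3 m w.2 - gr3 m w.1) * eps (-(gr3 m w0.2 - gr3 m w0.1)))
            * (∑ n : Fin Ls → Fin 3, eps (-(gr3 n p.2 - gr3 n p.1)) * eps (-(gr3 n p0.2 - gr3 n p0.1))))
        + eps (2 * (k:ℝ) * ((x w.2 - x w.1) - (z p.2 - z p.1)))
          * ((∑ m : Fin Lr → Fin 3, eps (-(gr3 m w.2 - gr3 m w.1)) * eps (-(gr3 m w0.2 - gr3 m w0.1)))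
            * (∑ n : Fin Ls → Fin 3, eps (gr3 n p.2 - gr3 n p.1) * eps (-(gr3 n p0.2 - gr3 n p0.1))))) / 2)) = 0 := by
    refine Finset.sum_eq_zero (fun w hw => Finset.sum_eq_zero (fun p hp => Finset.sum_eq_zero (fun k _ => ?_)))
    have hplt : p.1 < p.2 := (Finset.mem_filter.1 hp).2
    have hwlt : w.1 < w.2 := (Finset.mem_filter.1 hw).2
    rw [A2 p.2 p.1 p0.2 p0.1 hplt hp0lt, A2 w.2 w.1 w0.2 w0.1 hwlt hw0lt]
    simp
  have hvanW : ∀ w ∈ pairs Lr, w ≠ w0 → (∑ p ∈ pairs Ls, ∑ k ∈ Finset.range K,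
      ((c' w * d' p / 2 : ℝ) : ℂ) *
      ((eps (-(2 * (k:ℝ) * ((x w.2 - x w.1) + (z p.2 - z p.1))))
          * ((∑ m : Fin Lr → Fin 3, eps (gr3 m w.2 - gr3 m w.1) * eps (-(gr3 m w0.2 - gr3 m w0.1)))
            * (∑ n : Fin Ls → Fin 3, eps (gr3 n p.2 - gr3 n p.1) * eps (-(gr3 n p0.2 - gr3 n p0.1))))
        + eps (2 * (k:ℝ) * ((x w.2 - x w.1) + (z p.2 - z p.1)))
          * ((∑ m : Fin Lr → Fin 3, eps (-(gr3 m w.2 - gr3 m w.1)) * eps (-(gr3 m w0.2 - gr3 m w0.1)))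
            * (∑ n : Fin Ls → Fin 3, eps (-(gr3 n p.2 - gr3 n p.1)) * eps (-(gr3 n p0.2 - gr3 n p0.1))))) / 2)) = 0 := by
    intro w hw hne
    have hwlt : w.1 < w.2 := (Finset.mem_filter.1 hw).2
    refine Finset.sum_eq_zero (fun p _ => Finset.sum_eq_zero (fun k _ => ?_))
    rw [A1 w.2 w.1 w0.2 w0.1 hwlt hw0lt, A2 w.2 w.1 w0.2 w0.1 hwlt hw0lt,
      if_neg (fun hcon => hne (Prod.ext hcon.2 hcon.1))]
    simp
  have hvanP : ∀ p ∈ pairs Ls, p ≠ p0 → (∑ k ∈ Finset.range K,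
      ((c' w0 * d' p / 2 : ℝ) : ℂ) *
      ((eps (-(2 * (k:ℝ) * ((x w0.2 - x w0.1) + (z p.2 - z p.1))))
          * ((∑ m : Fin Lr → Fin 3, eps (gr3 m w0.2 - gr3 m w0.1) * eps (-(gr3 m w0.2 - gr3 m w0.1)))
            * (∑ n : Fin Ls → Fin 3, eps (gr3 n p.2 - gr3 n p.1) * eps (-(gr3 n p0.2 - gr3 n p0.1))))
        + eps (2 * (k:ℝ) * ((x w0.2 - x w0.1) + (z p.2 - z p.1)))
          * ((∑ m : Fin Lr → Fin 3, eps (-(gr3 m w0.2 - gr3 m w0.1)) * eps (-(gr3 m w0.2 - gr3 m w0.1)))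
            * (∑ n : Fin Ls → Fin 3, eps (-(gr3 n p.2 - gr3 n p.1)) * eps (-(gr3 n p0.2 - gr3 n p0.1))))) / 2)) = 0 := by
    intro p hp hne
    have hplt : p.1 < p.2 := (Finset.mem_filter.1 hp).2
    refine Finset.sum_eq_zero (fun k _ => ?_)
    rw [A1 p.2 p.1 p0.2 p0.1 hplt hp0lt, A2 p.2 p.1 p0.2 p0.1 hplt hp0lt,
      if_neg (fun hcon => hne (Prod.ext hcon.2 hcon.1))]
    simp
  rw [e1, e2, e3b, Finset.sum_eq_single_of_mem w0 hw0 hvanW,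
    Finset.sum_eq_single_of_mem p0 hp0 hvanP] at hS
  rw [A1 w0.2 w0.1 w0.2 w0.1 hw0lt hw0lt, A2 w0.2 w0.1 w0.2 w0.1 hw0lt hw0lt,
    A1 p0.2 p0.1 p0.2 p0.1 hp0lt hp0lt, A2 p0.2 p0.1 p0.2 p0.1 hp0lt hp0lt,
    if_pos ⟨rfl, rfl⟩, if_pos ⟨rfl, rfl⟩] at hS
  simp only [add_zero, zero_add, zero_mul, mul_zero] at hS
  have key : ((c' w0 * d' p0 / 2 : ℝ):ℂ) * ((3:ℂ)^Lr * (3:ℂ)^Ls) / 2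
      * (∑ k ∈ Finset.range K, eps (-(2 * (k:ℝ) * ((x w0.2 - x w0.1) + (z p0.2 - z p0.1))))) = 0 := by
    have hrw : ((c' w0 * d' p0 / 2 : ℝ):ℂ) * ((3:ℂ)^Lr * (3:ℂ)^Ls) / 2
        * (∑ k ∈ Finset.range K, eps (-(2 * (k:ℝ) * ((x w0.2 - x w0.1) + (z p0.2 - z p0.1)))))
        = ∑ k ∈ Finset.range K, ((c' w0 * d' p0 / 2 : ℝ):ℂ)
            * (eps (-(2 * (k:ℝ) * ((x w0.2 - x w0.1) + (z p0.2 - z p0.1)))) * ((3:ℂ)^Lr * (3:ℂ)^Ls) / 2) := by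
      rw [Finset.mul_sum]
      exact Finset.sum_congr rfl (fun k _ => by ring)
    rw [hrw]
    exact hS.symm
  have hpos : (0:ℝ) < c' w0 * d' p0 / 2 := by
    have := hc' w0 hw0
    have := hd' p0 hp0
    positivity
  have hconst : ((c' w0 * d' p0 / 2 : ℝ):ℂ) * ((3:ℂ)^Lr * (3:ℂ)^Ls) / 2 ≠ 0 := by
    apply div_ne_zero
    · exact mul_ne_zero (Complex.ofReal_ne_zero.2 (ne_of_gt hpos))
        (mul_ne_zero (pow_ne_zero _ (by norm_num)) (pow_ne_zero _ (by norm_num)))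
    · norm_num
  have hsum0 : ∑ k ∈ Finset.range K,
      eps (-(2 * (k:ℝ) * ((x w0.2 - x w0.1) + (z p0.2 - z p0.1)))) = 0 := by
    rcases mul_eq_zero.1 key with h | h
    · exact absurd h hconst
    · exact h
  exact geom_eps K hK _ hsum0

lemma case3m (hK : 1 ≤ K)
    (hc' : ∀ w ∈ pairs Lr, 0 < c' w) (hd' : ∀ p ∈ pairs Ls, 0 < d' p)
    (hJall : ∀ y v, Ja K Lr Ls c c' d d' x z y v = 0)
    (w0 : Fin Lr × Fin Lr) (hw0 : w0 ∈ pairs Lr)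
    (p0 : Fin Ls × Fin Ls) (hp0 : p0 ∈ pairs Ls) :
    (x w0.2 - x w0.1) - (z p0.2 - z p0.1) ∈ Xstar K := by
  have hw0lt : w0.1 < w0.2 := (Finset.mem_filter.1 hw0).2
  have hp0lt : p0.1 < p0.2 := (Finset.mem_filter.1 hp0).2
  have hS := S_eq K Lr Ls c c' d d' x z
    (fun m => eps (-(gr3 m w0.2 - gr3 m w0.1))) (fun n => eps (gr3 n p0.2 - gr3 n p0.1))
  simp only [hJall, Complex.ofReal_zero, zero_mul, Finset.sum_const_zero] at hS
  have e1 : (∑ w ∈ pairs Lr, ∑ k ∈ Finset.range K,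
      ((c w : ℝ):ℂ) *
      ((eps (-(2 * (k:ℝ) * (x w.2 - x w.1)))
          * ((∑ m : Fin Lr → Fin 3, eps (gr3 m w.2 - gr3 m w.1) * eps (-(gr3 m w0.2 - gr3 m w0.1)))
            * (∑ n : Fin Ls → Fin 3, eps (gr3 n p0.2 - gr3 n p0.1)))
        + eps (2 * (k:ℝ) * (x w.2 - x w.1))
          * ((∑ m : Fin Lr → Fin 3, eps (-(gr3 m w.2 - gr3 m w.1)) * eps (-(gr3 m w0.2 - gr3 m w0.1)))
            * (∑ n : Fin Ls → Fin 3, eps (gr3 n p0.2 - gr3 n p0.1)))) / 2)) = 0 := by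
    refine Finset.sum_eq_zero (fun w _ => Finset.sum_eq_zero (fun k _ => ?_))
    rw [A5 p0.2 p0.1 (Fin.ne_of_gt hp0lt)]
    simp
  have e2 : (∑ p ∈ pairs Ls, ∑ k ∈ Finset.range K,
      ((d p : ℝ):ℂ) *
      ((eps (-(2 * (k:ℝ) * (z p.2 - z p.1)))
          * ((∑ m : Fin Lr → Fin 3, eps (-(gr3 m w0.2 - gr3 m w0.1)))
            * (∑ n : Fin Ls → Fin 3, eps (gr3 n p.2 - gr3 n p.1) * eps (gr3 n p0.2 - gr3 n p0.1)))
        + eps (2 * (k:ℝ) * (z p.2 - z p.1))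
          * ((∑ m : Fin Lr → Fin 3, eps (-(gr3 m w0.2 - gr3 m w0.1)))
            * (∑ n : Fin Ls → Fin 3, eps (-(gr3 n p.2 - gr3 n p.1)) * eps (gr3 n p0.2 - gr3 n p0.1)))) / 2)) = 0 := by
    refine Finset.sum_eq_zero (fun p _ => Finset.sum_eq_zero (fun k _ => ?_))
    rw [A6 w0.2 w0.1 (Fin.ne_of_gt hw0lt)]
    simp
  have e3a : (∑ w ∈ pairs Lr, ∑ p ∈ pairs Ls, ∑ k ∈ Finset.range K,
      ((c' w * d' p / 2 : ℝ) : ℂ) *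
      ((eps (-(2 * (k:ℝ) * ((x w.2 - x w.1) + (z p.2 - z p.1))))
          * ((∑ m : Fin Lr → Fin 3, eps (gr3 m w.2 - gr3 m w.1) * eps (-(gr3 m w0.2 - gr3 m w0.1)))
            * (∑ n : Fin Ls → Fin 3, eps (gr3 n p.2 - gr3 n p.1) * eps (gr3 n p0.2 - gr3 n p0.1)))
        + eps (2 * (k:ℝ) * ((x w.2 - x w.1) + (z p.2 - z p.1)))
          * ((∑ m : Fin Lr → Fin 3, eps (-(gr3 m w.2 - gr3 m w.1)) * eps (-(gr3 m w0.2 - gr3 m w0.1)))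
            * (∑ n : Fin Ls → Fin 3, eps (-(gr3 n p.2 - gr3 n p.1)) * eps (gr3 n p0.2 - gr3 n p0.1)))) / 2)) = 0 := by
    refine Finset.sum_eq_zero (fun w hw => Finset.sum_eq_zero (fun p hp => Finset.sum_eq_zero (fun k _ => ?_)))
    have hplt : p.1 < p.2 := (Finset.mem_filter.1 hp).2
    have hwlt : w.1 < w.2 := (Finset.mem_filter.1 hw).2
    rw [A4 p.2 p.1 p0.2 p0.1 hplt hp0lt, A2 w.2 w.1 w0.2 w0.1 hwlt hw0lt]
    simp
  have hvanW : ∀ w ∈ pairs Lr, w ≠ w0 → (∑ p ∈ pairs Ls, ∑ k ∈ Finset.range K,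
      ((c' w * d' p / 2 : ℝ) : ℂ) *
      ((eps (-(2 * (k:ℝ) * ((x w.2 - x w.1) - (z p.2 - z p.1))))
          * ((∑ m : Fin Lr → Fin 3, eps (gr3 m w.2 - gr3 m w.1) * eps (-(gr3 m w0.2 - gr3 m w0.1)))
            * (∑ n : Fin Ls → Fin 3, eps (-(gr3 n p.2 - gr3 n p.1)) * eps (gr3 n p0.2 - gr3 n p0.1)))
        + eps (2 * (k:ℝ) * ((x w.2 - x w.1) - (z p.2 - z p.1)))
          * ((∑ m : Fin Lr → Fin 3, eps (-(gr3 m w.2 - gr3 m w.1)) * eps (-(gr3 m w0.2 - gr3 m w0.1)))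
            * (∑ n : Fin Ls → Fin 3, eps (gr3 n p.2 - gr3 n p.1) * eps (gr3 n p0.2 - gr3 n p0.1)))) / 2)) = 0 := by
    intro w hw hne
    have hwlt : w.1 < w.2 := (Finset.mem_filter.1 hw).2
    refine Finset.sum_eq_zero (fun p _ => Finset.sum_eq_zero (fun k _ => ?_))
    rw [A1 w.2 w.1 w0.2 w0.1 hwlt hw0lt, A2 w.2 w.1 w0.2 w0.1 hwlt hw0lt,
      if_neg (fun hcon => hne (Prod.ext hcon.2 hcon.1))]
    simp
  have hvanP : ∀ p ∈ pairs Ls, p ≠ p0 → (∑ k ∈ Finset.range K,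
      ((c' w0 * d' p / 2 : ℝ) : ℂ) *
      ((eps (-(2 * (k:ℝ) * ((x w0.2 - x w0.1) - (z p.2 - z p.1))))
          * ((∑ m : Fin Lr → Fin 3, eps (gr3 m w0.2 - gr3 m w0.1) * eps (-(gr3 m w0.2 - gr3 m w0.1)))
            * (∑ n : Fin Ls → Fin 3, eps (-(gr3 n p.2 - gr3 n p.1)) * eps (gr3 n p0.2 - gr3 n p0.1)))
        + eps (2 * (k:ℝ) * ((x w0.2 - x w0.1) - (z p.2 - z p.1)))
          * ((∑ m : Fin Lr → Fin 3, eps (-(gr3 m w0.2 - gr3 m w0.1)) * eps (-(gr3 m w0.2 - gr3 m w0.1)))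
            * (∑ n : Fin Ls → Fin 3, eps (gr3 n p.2 - gr3 n p.1) * eps (gr3 n p0.2 - gr3 n p0.1)))) / 2)) = 0 := by
    intro p hp hne
    have hplt : p.1 < p.2 := (Finset.mem_filter.1 hp).2
    refine Finset.sum_eq_zero (fun k _ => ?_)
    rw [A3 p.2 p.1 p0.2 p0.1 hplt hp0lt,
      if_neg (fun hcon => hne (Prod.ext hcon.2 hcon.1)),
      A2 w0.2 w0.1 w0.2 w0.1 hw0lt hw0lt]
    simp
  rw [e1, e2, e3a, Finset.sum_eq_single_of_mem w0 hw0 hvanW,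
    Finset.sum_eq_single_of_mem p0 hp0 hvanP] at hS
  rw [A1 w0.2 w0.1 w0.2 w0.1 hw0lt hw0lt, A2 w0.2 w0.1 w0.2 w0.1 hw0lt hw0lt,
    A3 p0.2 p0.1 p0.2 p0.1 hp0lt hp0lt,
    if_pos ⟨rfl, rfl⟩, if_pos ⟨rfl, rfl⟩] at hS
  simp only [add_zero, zero_add, zero_mul, mul_zero] at hS
  have key : ((c' w0 * d' p0 / 2 : ℝ):ℂ) * ((3:ℂ)^Lr * (3:ℂ)^Ls) / 2
      * (∑ k ∈ Finset.range K, eps (-(2 * (k:ℝ) * ((x w0.2 - x w0.1) - (z p0.2 - z p0.1))))) = 0 := by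
    have hrw : ((c' w0 * d' p0 / 2 : ℝ):ℂ) * ((3:ℂ)^Lr * (3:ℂ)^Ls) / 2
        * (∑ k ∈ Finset.range K, eps (-(2 * (k:ℝ) * ((x w0.2 - x w0.1) - (z p0.2 - z p0.1)))))
        = ∑ k ∈ Finset.range K, ((c' w0 * d' p0 / 2 : ℝ):ℂ)
            * (eps (-(2 * (k:ℝ) * ((x w0.2 - x w0.1) - (z p0.2 - z p0.1)))) * ((3:ℂ)^Lr * (3:ℂ)^Ls) / 2) := by
      rw [Finset.mul_sum]
      exact Finset.sum_congr rfl (fun k _ => by ring)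
    rw [hrw]
    exact hS.symm
  have hpos : (0:ℝ) < c' w0 * d' p0 / 2 := by
    have := hc' w0 hw0
    have := hd' p0 hp0
    positivity
  have hconst : ((c' w0 * d' p0 / 2 : ℝ):ℂ) * ((3:ℂ)^Lr * (3:ℂ)^Ls) / 2 ≠ 0 := by
    apply div_ne_zero
    · exact mul_ne_zero (Complex.ofReal_ne_zero.2 (ne_of_gt hpos))
        (mul_ne_zero (pow_ne_zero _ (by norm_num)) (pow_ne_zero _ (by norm_num)))
    · norm_num
  have hsum0 : ∑ k ∈ Finset.range K,
      eps (-(2 * (k:ℝ) * ((x w0.2 - x w0.1) - (z p0.2 - z p0.1)))) = 0 := by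
    rcases mul_eq_zero.1 key with h | h
    · exact absurd h hconst
    · exact h
  exact geom_eps K hK _ hsum0

end main

end Stmt10Aux

theorem stmt10 (K Lr Ls : ℕ) (hK : 1 ≤ K) (hLr : 1 ≤ Lr) (hLs : 1 ≤ Ls)
    (c c' : Fin Lr × Fin Lr → ℝ) (d d' : Fin Ls × Fin Ls → ℝ)
    (hc : ∀ w ∈ pairs Lr, 0 < c w) (hc' : ∀ w ∈ pairs Lr, 0 < c' w)
    (hd : ∀ p ∈ pairs Ls, 0 < d p) (hd' : ∀ p ∈ pairs Ls, 0 < d' p)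
    (x : Fin Lr → ℝ) (z : Fin Ls → ℝ)
    (hJ : ∀ y ∈ cube Lr, ∀ v ∈ cube Ls, Ja K Lr Ls c c' d d' x z y v = 0) :
    DXsub K Lr Ls x z := by
  have hJall := Stmt10Aux.Ja_all K Lr Ls c c' d d' x z hJ
  refine ⟨fun w0 hw0 => ?_, fun p0 hp0 => ?_, fun w0 hw0 p0 hp0 => ⟨?_, ?_⟩⟩
  · exact Stmt10Aux.case1 K Lr Ls c c' d d' x z hK hc hJall w0 hw0
  · exact Stmt10Aux.case2 K Lr Ls c c' d d' x z hK hd hJall p0 hp0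
  · exact Stmt10Aux.case3p K Lr Ls c c' d d' x z hK hc' hd' hJall w0 hw0 p0 hp0
  · exact Stmt10Aux.case3m K Lr Ls c c' d d' x z hK hc' hd' hJall w0 hw0 p0 hp0
end

section
/- ∫_{[0,2π)^{L_r+L_s}} f²(Δ_X, Δ_Y + C) dy dv = (1/2)(2π)^{L_r+L_s}·K² if Δ_X ∈ {qπ : q∈ℤ}, and (1/2)(2π)^{L_r+L_s}·sin²(K·Δ_X)/sin²(Δ_X) otherwise, where Δ_Y is a sum/difference of distinct integration variables (so it contains at least one variable with coefficient ±1) and C is a constant. -/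
/-!
Write `fK K x θ = A cos θ + B sin θ` with `A + iB = Σ_{k<K} e^{2ikx}`. Its square is `(A² + B²)/2`
plus a combination of `cos 2θ` and `sin 2θ`. For `θ = n (y_i - y_l) + ψ` with `n ≠ 0` and `i ≠ l`,
`e^{2iθ}` is a product of characters of the single coordinates, one of them nontrivial, so it
integrates to zero over the cube. Hence the integral is the volume times `|Σ_{k<K} e^{2ikx}|² / 2`,
which is `K² / 2` when `x ∈ πℤ` and, summing the geometric series, `sin² (Kx) / (2 sin² x)`
otherwise.
-/

open MeasureTheory Real Finset

lemma integral_cube_const (L : ℕ) (c : ℝ) : ∫ _ in cube L, c = (2 * π) ^ L * c := by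
  simp [cube, measureReal_def, volume_pi_pi, Real.pi_pos.le]

lemma Continuous.integrableOn_cube {L : ℕ} {E : Type*} [NormedAddCommGroup E]
    {f : (Fin L → ℝ) → E} (hf : Continuous f) : IntegrableOn f (cube L) :=
  (hf.integrableOn_Icc (a := 0) (b := fun _ => 2 * π)).mono_set fun _ hy =>
    ⟨fun t => (hy t (Set.mem_univ t)).1, fun t => (hy t (Set.mem_univ t)).2.le⟩

lemma integral_cube_prod {L : ℕ} {𝕜 : Type*} [RCLike 𝕜] (g : Fin L → ℝ → 𝕜) :
    ∫ y in cube L, ∏ t, g t (y t) = ∏ t, ∫ u in Set.Ico 0 (2 * π), g t u := by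
  rw [cube, volume_pi, Measure.restrict_pi_pi]
  exact integral_fintype_prod_eq_prod _

lemma integral_Ico_exp_int_mul_I {n : ℤ} (hn : n ≠ 0) :
    ∫ u in Set.Ico 0 (2 * π), Complex.exp (n * u * Complex.I) = 0 := by
  have hc : (n * Complex.I : ℂ) ≠ 0 := by simp [hn]
  rw [integral_Ico_eq_integral_Ioo, ← integral_Ioc_eq_integral_Ioo,
    ← intervalIntegral.integral_of_le (by positivity)]
  simp_rw [mul_right_comm _ _ Complex.I]
  rw [integral_exp_mul_complex hc]
  have h : n * Complex.I * ((2 * π : ℝ) : ℂ) = n * (2 * π * Complex.I) := by push_cast; ring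
  rw [h, Complex.exp_int_mul_two_pi_mul_I]
  simp

lemma integral_cube_exp_sum_mul_I {L : ℕ} {c : Fin L → ℤ} (hc : c ≠ 0) :
    ∫ y in cube L, Complex.exp ((∑ t, c t * y t : ℝ) * Complex.I) = 0 := by
  obtain ⟨t₀, ht₀⟩ := Function.ne_iff.mp hc
  simp_rw [Complex.ofReal_sum, Finset.sum_mul, Complex.exp_sum]
  push_cast
  rw [integral_cube_prod (fun t u => Complex.exp (c t * u * Complex.I))]
  exact Finset.prod_eq_zero (mem_univ t₀) (integral_Ico_exp_int_mul_I ht₀)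

lemma integral_cube_cos_sin_eq_zero {L : ℕ} {i l : Fin L} (hil : i ≠ l) {n : ℤ} (hn : n ≠ 0)
    (ψ : ℝ) :
    ∫ y in cube L, cos (n * (y i - y l) + ψ) = 0 ∧
      ∫ y in cube L, sin (n * (y i - y l) + ψ) = 0 := by
  set c : Fin L → ℤ := Pi.single i n - Pi.single l n
  have hc : c ≠ 0 := fun h => hn (by simpa [c, hil] using congrFun h i)
  have hsum (y : Fin L → ℝ) : ∑ t, (c t : ℝ) * y t = n * (y i - y l) := by
    simp [c, Pi.single_apply, sub_mul, Finset.sum_sub_distrib, mul_sub]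
  set F : (Fin L → ℝ) → ℂ := fun y => Complex.exp ((n * (y i - y l) + ψ : ℝ) * Complex.I)
  have hF : ∫ y in cube L, F y = 0 := by
    have hF' : F = fun y => Complex.exp (ψ * Complex.I) *
        Complex.exp ((∑ t, c t * y t : ℝ) * Complex.I) := by
      funext y; simp only [F]; rw [← Complex.exp_add, hsum]; push_cast; ring_nf
    rw [hF', integral_const_mul, integral_cube_exp_sum_mul_I hc, mul_zero]
  have hFint : IntegrableOn F (cube L) := Continuous.integrableOn_cube (by fun_prop)
  constructor
  · have h := (integral_re hFint).trans (congrArg Complex.re hF)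
    simpa only [F, RCLike.re_to_complex, Complex.exp_ofReal_mul_I_re, Complex.zero_re] using h
  · have h := (integral_im hFint).trans (congrArg Complex.im hF)
    simpa only [F, RCLike.im_to_complex, Complex.exp_ofReal_mul_I_im, Complex.zero_im] using h

lemma integral_cube_sq_mul_cos_add_mul_sin {L : ℕ} {i l : Fin L} (hil : i ≠ l) {n : ℤ}
    (hn : n ≠ 0) (A B ψ : ℝ) :
    ∫ y in cube L, (A * cos (n * (y i - y l) + ψ) + B * sin (n * (y i - y l) + ψ)) ^ 2 =
      (2 * π) ^ L * ((A ^ 2 + B ^ 2) / 2) := by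
  have hsq (θ : ℝ) : (A * cos θ + B * sin θ) ^ 2 =
      (A ^ 2 + B ^ 2) / 2 + ((A ^ 2 - B ^ 2) / 2 * cos (2 * θ) + A * B * sin (2 * θ)) := by
    rw [cos_two_mul, sin_two_mul]
    nlinarith [sin_sq_add_cos_sq θ]
  have hdouble (y : Fin L → ℝ) :
      2 * (n * (y i - y l) + ψ) = ((2 * n : ℤ) : ℝ) * (y i - y l) + 2 * ψ := by
    push_cast; ring
  obtain ⟨hcos, hsin⟩ := integral_cube_cos_sin_eq_zero hil (mul_ne_zero two_ne_zero hn) (2 * ψ)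
  simp_rw [hsq, hdouble]
  rw [integral_add, integral_add, integral_const_mul, integral_const_mul, hcos, hsin,
    integral_cube_const]
  · ring
  all_goals exact Continuous.integrableOn_cube (by fun_prop)

noncomputable def expSum (K : ℕ) (x : ℝ) : ℂ :=
  ∑ k ∈ range K, Complex.exp ((2 * k * x : ℝ) * Complex.I)

lemma fK_eq_re_mul_cos_add_im_mul_sin (K : ℕ) (x θ : ℝ) :
    fK K x θ = (expSum K x).re * cos θ + (expSum K x).im * sin θ := by
  simp only [fK, expSum, Complex.re_sum, Complex.im_sum, Complex.exp_ofReal_mul_I_re,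
    Complex.exp_ofReal_mul_I_im, Finset.sum_mul, ← Finset.sum_add_distrib, cos_sub]
  exact Finset.sum_congr rfl fun k _ => by ring

lemma expSum_int_mul_pi (K : ℕ) (q : ℤ) : expSum K (q * π) = K := by
  have h (k : ℕ) :
      ((2 * k * (q * π) : ℝ) : ℂ) * Complex.I = (k * q : ℤ) * (2 * π * Complex.I) := by
    push_cast; ring
  simp only [expSum, h, Complex.exp_int_mul_two_pi_mul_I]
  simp

lemma norm_expSum {x : ℝ} (hx : sin x ≠ 0) (K : ℕ) :
    ‖expSum K x‖ = |sin (K * x)| / |sin x| := by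
  set z := Complex.exp (Complex.I * (2 * x : ℝ))
  have hz (k : ℕ) : z ^ k = Complex.exp (Complex.I * (2 * (k * x) : ℝ)) := by
    rw [← Complex.exp_nat_mul]; congr 1; push_cast; ring
  have hnorm (t : ℝ) : ‖Complex.exp (Complex.I * (2 * t : ℝ)) - 1‖ = 2 * |sin t| := by
    rw [Complex.norm_exp_I_mul_ofReal_sub_one]; simp
  have hz1 : z ≠ 1 := by
    intro h
    have h0 := hnorm x
    rw [show Complex.exp (Complex.I * (2 * x : ℝ)) = z from rfl, h, sub_self, norm_zero] at h0
    exact hx (abs_eq_zero.mp (by linarith))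
  have hS : expSum K x = ∑ k ∈ range K, z ^ k := by
    refine Finset.sum_congr rfl fun k _ => ?_
    rw [hz]; congr 1; push_cast; ring
  rw [hS, geom_sum_eq hz1, norm_div, hz, hnorm, hnorm]
  field_simp

lemma integral_cube_fK_sq {L : ℕ} {i l : Fin L} (hil : i ≠ l) {n : ℤ} (hn : n ≠ 0) (K : ℕ)
    (x ψ : ℝ) :
    ∫ y in cube L, fK K x (n * (y i - y l) + ψ) ^ 2 = (2 * π) ^ L * (‖expSum K x‖ ^ 2 / 2) := by
  simp_rw [fK_eq_re_mul_cos_add_im_mul_sin, integral_cube_sq_mul_cos_add_mul_sin hil hn,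
    Complex.sq_norm, Complex.normSq_apply]
  ring

lemma integral_cube_integral_cube_fK_sq {Lr Ls : ℕ} {l i : Fin Lr} {m j : Fin Ls} {n p : ℤ}
    (hnp : n ≠ 0 ∨ p ≠ 0) (hil : n ≠ 0 → i ≠ l) (hjm : p ≠ 0 → j ≠ m) (K : ℕ) (x C : ℝ) :
    ∫ y in cube Lr, ∫ v in cube Ls, fK K x (n * (y i - y l) + p * (v j - v m) + C) ^ 2 =
      (2 * π) ^ (Lr + Ls) * (‖expSum K x‖ ^ 2 / 2) := by
  rcases eq_or_ne p 0 with rfl | hp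
  · have hn := hnp.resolve_right (not_not.mpr rfl)
    simp only [Int.cast_zero, zero_mul, add_zero, integral_cube_const]
    rw [integral_const_mul, integral_cube_fK_sq (hil hn) hn, pow_add]
    ring
  · have h (y : Fin Lr → ℝ) (v : Fin Ls → ℝ) :
        n * (y i - y l) + p * (v j - v m) + C = p * (v j - v m) + (n * (y i - y l) + C) := by
      ring
    simp_rw [h, integral_cube_fK_sq (hjm hp) hp, integral_cube_const, pow_add]
    ring

theorem stmt12_general (K Lr Ls : ℕ)
    (l i : Fin Lr) (m j : Fin Ls) (a b : ℝ)
    (ha : a = 0 ∨ a = 1 ∨ a = -1) (hb : b = 0 ∨ b = 1 ∨ b = -1)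
    (hab : ¬(a = 0 ∧ b = 0)) (hal : a ≠ 0 → l ≠ i) (hbm : b ≠ 0 → m ≠ j)
    (ΔX C : ℝ) :
    ((∃ q : ℤ, ΔX = (q : ℝ) * Real.pi) →
      (∫ y in cube Lr, ∫ v in cube Ls,
        (fK K ΔX (a * (y i - y l) + b * (v j - v m) + C)) ^ 2) =
      (1 / 2) * (2 * Real.pi) ^ (Lr + Ls) * (K : ℝ) ^ 2) ∧
    ((¬ ∃ q : ℤ, ΔX = (q : ℝ) * Real.pi) →
      (∫ y in cube Lr, ∫ v in cube Ls,
        (fK K ΔX (a * (y i - y l) + b * (v j - v m) + C)) ^ 2) =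
      (1 / 2) * (2 * Real.pi) ^ (Lr + Ls) *
        (Real.sin ((K : ℝ) * ΔX)) ^ 2 / (Real.sin ΔX) ^ 2) := by
  obtain ⟨n, rfl⟩ : ∃ n : ℤ, a = n := by
    rcases ha with rfl | rfl | rfl
    exacts [⟨0, by simp⟩, ⟨1, by simp⟩, ⟨-1, by simp⟩]
  obtain ⟨p, rfl⟩ : ∃ p : ℤ, b = p := by
    rcases hb with rfl | rfl | rfl
    exacts [⟨0, by simp⟩, ⟨1, by simp⟩, ⟨-1, by simp⟩]
  have hnp : n ≠ 0 ∨ p ≠ 0 := by simpa only [Int.cast_eq_zero, not_and_or] using hab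
  rw [integral_cube_integral_cube_fK_sq hnp (fun hn => (hal (Int.cast_ne_zero.mpr hn)).symm)
    (fun hp => (hbm (Int.cast_ne_zero.mpr hp)).symm)]
  constructor
  · rintro ⟨q, rfl⟩
    rw [expSum_int_mul_pi, Complex.norm_natCast]
    ring
  · intro hx
    have hsin : sin ΔX ≠ 0 := fun h => hx <| by
      obtain ⟨q, hq⟩ := sin_eq_zero_iff.mp h
      exact ⟨q, hq.symm⟩
    rw [norm_expSum hsin, div_pow, sq_abs, sq_abs]
    ring

theorem stmt12 (K Lr Ls : ℕ) (hK : 1 ≤ K)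
    (l i : Fin Lr) (m j : Fin Ls) (a b : ℝ)
    (ha : a = 0 ∨ a = 1 ∨ a = -1) (hb : b = 0 ∨ b = 1 ∨ b = -1)
    (hab : ¬(a = 0 ∧ b = 0)) (hal : a ≠ 0 → l ≠ i) (hbm : b ≠ 0 → m ≠ j)
    (ΔX C : ℝ) :
    ((∃ q : ℤ, ΔX = (q : ℝ) * Real.pi) →
      (∫ y in cube Lr, ∫ v in cube Ls,
        (fK K ΔX (a * (y i - y l) + b * (v j - v m) + C)) ^ 2) =
      (1 / 2) * (2 * Real.pi) ^ (Lr + Ls) * (K : ℝ) ^ 2) ∧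
    ((¬ ∃ q : ℤ, ΔX = (q : ℝ) * Real.pi) →
      (∫ y in cube Lr, ∫ v in cube Ls,
        (fK K ΔX (a * (y i - y l) + b * (v j - v m) + C)) ^ 2) =
      (1 / 2) * (2 * Real.pi) ^ (Lr + Ls) *
        (Real.sin ((K : ℝ) * ΔX)) ^ 2 / (Real.sin ΔX) ^ 2) :=
  stmt12_general K Lr Ls l i m j a b ha hb hab hal hbm ΔX C
end

section
/- Let 𝒳* = {qπ/K : q ∈ ℤ} \ {nπ : n ∈ ℤ}. There exist x ∈ ℝ^{L_r} and z ∈ ℝ^{L_s} such that all the quantities x_i - x_l, z_j - z_m, and (x_i - x_l) ± (z_j - z_m) (for 0 ≤ l < i ≤ L_r-1, 0 ≤ m < j ≤ L_s-1) lie in 𝒳*, if and only if L_r·L_s ≤ K. -/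
open MeasureTheory Real Finset

/-!
Since `Xstar K` is closed under negation, the conditions say that the `Lr * Ls` numbers
`x i + z j` lie in one class modulo `π / K` but are pairwise incongruent modulo `π`; there are
only `K` such classes, so `Lr * Ls ≤ K`. Conversely, `x i = Ls * i * π / K`, `z j = j * π / K`
enumerates `Lr * Ls` consecutive multiples of `π / K`, whose differences are nonzero and smaller
than `π` in absolute value.
-/

lemma mem_Xstar_iff {K : ℕ} (hK : K ≠ 0) {r : ℝ} :
    r ∈ Xstar K ↔ ∃ q : ℤ, r = q * π / K ∧ ¬ (K : ℤ) ∣ q := by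
  have hK' : (K : ℝ) ≠ 0 := Nat.cast_ne_zero.mpr hK
  constructor
  · rintro ⟨⟨q, rfl⟩, hq⟩
    refine ⟨q, rfl, ?_⟩
    rintro ⟨n, rfl⟩
    exact hq n (by push_cast; field_simp)
  · rintro ⟨q, rfl, hq⟩
    refine ⟨⟨q, rfl⟩, fun n hn => hq ⟨n, ?_⟩⟩
    field_simp at hn
    exact_mod_cast hn

lemma neg_mem_Xstar {K : ℕ} {r : ℝ} (h : r ∈ Xstar K) : -r ∈ Xstar K := by
  obtain ⟨⟨q, rfl⟩, hr⟩ := h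
  refine ⟨⟨-q, by push_cast; ring⟩, fun n hn => hr (-n) ?_⟩
  push_cast
  linarith

lemma intCast_mul_pi_div_mem_Xstar {K : ℕ} {q : ℤ} (hq : q ≠ 0) (hqK : |q| < K) :
    (q : ℝ) * π / K ∈ Xstar K := by
  have hK : K ≠ 0 := by rintro rfl; exact absurd hqK (by simp)
  exact (mem_Xstar_iff hK).mpr ⟨q, rfl, fun hdvd => hq (Int.eq_zero_of_abs_lt_dvd hdvd hqK)⟩

lemma sub_mul_pi_div_mem_Xstar {K n : ℕ} (hn : n ≤ K) {a b : Fin n} (hab : a ≠ b) :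
    ((a : ℝ) - b) * π / K ∈ Xstar K := by
  have hq : ((a : ℤ) - b) ≠ 0 := sub_ne_zero.mpr (by exact_mod_cast Fin.val_ne_of_ne hab)
  have hqK : |(a : ℤ) - b| < K := abs_sub_lt_iff.mpr ⟨by omega, by omega⟩
  exact_mod_cast intCast_mul_pi_div_mem_Xstar hq hqK

lemma card_le_of_pairwise_sub_mem_Xstar {K : ℕ} [NeZero K] {ι : Type*} [Fintype ι] (t : ι → ℝ)
    (ht : ∀ a b, a ≠ b → t a - t b ∈ Xstar K) : Fintype.card ι ≤ K := by
  rcases isEmpty_or_nonempty ι with _ | ⟨⟨a₀⟩⟩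
  · simp
  have hq : ∀ a, ∃ q : ℤ, t a - t a₀ = q * π / K := by
    intro a
    by_cases ha : a = a₀
    · exact ⟨0, by simp [ha]⟩
    · exact (ht a a₀ ha).1
  choose q hq using hq
  have hinj : Function.Injective fun a => (q a : ZMod K) := by
    intro a b hab
    by_contra hne
    obtain ⟨n, hn⟩ := (ZMod.intCast_eq_intCast_iff_dvd_sub _ _ _).mp hab.symm
    apply (ht a b hne).2 n
    have hK : (K : ℝ) ≠ 0 := NeZero.ne _
    calc t a - t b = ((q a : ℝ) - q b) * π / K := by rw [sub_mul, sub_div, ← hq, ← hq]; ring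
      _ = n * π := by
        rw [← Int.cast_sub, hn]
        push_cast
        field_simp
  simpa using Fintype.card_le_of_injective _ hinj

lemma dXsub_iff {K Lr Ls : ℕ} (hLr : 1 ≤ Lr) (hLs : 1 ≤ Ls) {x : Fin Lr → ℝ} {z : Fin Ls → ℝ} :
    DXsub K Lr Ls x z ↔
      ∀ p q : Fin Lr × Fin Ls, p ≠ q → (x p.1 + z p.2) - (x q.1 + z q.2) ∈ Xstar K := by
  have mem_pairs {L : ℕ} {a b : Fin L} : (a, b) ∈ pairs L ↔ a < b := by simp [pairs]
  constructor
  · rintro ⟨hx, hz, hxz⟩ ⟨i, j⟩ ⟨l, m⟩ hne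
    rcases lt_trichotomy i l with hil | rfl | hil <;>
      rcases lt_trichotomy j m with hjm | rfl | hjm
    · convert neg_mem_Xstar (hxz _ (mem_pairs.mpr hil) _ (mem_pairs.mpr hjm)).1 using 1; ring
    · convert neg_mem_Xstar (hx _ (mem_pairs.mpr hil)) using 1; ring
    · convert neg_mem_Xstar (hxz _ (mem_pairs.mpr hil) _ (mem_pairs.mpr hjm)).2 using 1; ring
    · convert neg_mem_Xstar (hz _ (mem_pairs.mpr hjm)) using 1; ring
    · exact absurd rfl hne
    · convert hz _ (mem_pairs.mpr hjm) using 1; ring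
    · convert hxz _ (mem_pairs.mpr hil) _ (mem_pairs.mpr hjm) |>.2 using 1; ring
    · convert hx _ (mem_pairs.mpr hil) using 1; ring
    · convert hxz _ (mem_pairs.mpr hil) _ (mem_pairs.mpr hjm) |>.1 using 1; ring
  · intro h
    let i₀ : Fin Lr := ⟨0, hLr⟩
    let j₀ : Fin Ls := ⟨0, hLs⟩
    refine ⟨fun ⟨l, i⟩ hw => ?_, fun ⟨m, j⟩ hp => ?_, fun ⟨l, i⟩ hw ⟨m, j⟩ hp => ⟨?_, ?_⟩⟩
    · convert h (i, j₀) (l, j₀) (by simp [(mem_pairs.mp hw).ne']) using 1; ring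
    · convert h (i₀, j) (i₀, m) (by simp [(mem_pairs.mp hp).ne']) using 1; ring
    · convert h (i, j) (l, m) (by simp [(mem_pairs.mp hw).ne']) using 1; ring
    · convert h (i, m) (l, j) (by simp [(mem_pairs.mp hw).ne']) using 1; ring

theorem stmt13_general (K Lr Ls : ℕ) (hK : 1 ≤ K) (hLr : 1 ≤ Lr) (hLs : 1 ≤ Ls) :
    (∃ (x : Fin Lr → ℝ) (z : Fin Ls → ℝ), DXsub K Lr Ls x z) ↔ Lr * Ls ≤ K := by
  have : NeZero K := ⟨by omega⟩
  simp_rw [dXsub_iff hLr hLs]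
  constructor
  · rintro ⟨x, z, h⟩
    simpa using card_le_of_pairwise_sub_mem_Xstar (fun p : Fin Lr × Fin Ls => x p.1 + z p.2) h
  · intro hKL
    -- `x i + z j = (Ls * i + j) * π / K`, the position of `(i, j)` in `Fin (Lr * Ls)`
    refine ⟨fun i => (Ls * i : ℕ) * π / K, fun j => (j : ℕ) * π / K, fun p q hpq => ?_⟩
    convert sub_mul_pi_div_mem_Xstar hKL (finProdFinEquiv.injective.ne hpq) using 1
    simp only [finProdFinEquiv_apply_val]
    push_cast
    ring

theorem stmt13 (K Lr Ls : ℕ) (hK : 1 ≤ K) (hLr : 1 ≤ Lr) (hLs : 1 ≤ Ls)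
    (h2 : 2 < Lr + Ls) :
    (∃ (x : Fin Lr → ℝ) (z : Fin Ls → ℝ), DXsub K Lr Ls x z) ↔ Lr * Ls ≤ K :=
  stmt13_general K Lr Ls hK hLr hLs
end

section
/- If L_r·L_s ≤ K, then the choice x_l = lπ/K (0 ≤ l ≤ L_r-1) and z_m = m·L_r·π/K (0 ≤ m ≤ L_s-1) satisfies: every difference x_i - x_l (l<i), every difference z_j - z_m (m<j), and every sum/difference (x_i - x_l) ± (z_j - z_m), lies in 𝒳* = {qπ/K : q∈ℤ} \ {nπ : n∈ℤ}. -/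
open MeasureTheory Real Finset

lemma mem_Xstar_of (K : ℕ) (hK : 1 ≤ K) (q : ℤ) (hq0 : q ≠ 0) (hqK : |q| < K) :
    (q : ℝ) * Real.pi / K ∈ Xstar K := by
  refine ⟨⟨q, rfl⟩, ?_⟩
  intro n hn
  have hKpos : (0:ℝ) < K := by exact_mod_cast hK
  have hpi := Real.pi_ne_zero
  have hq : (q : ℝ) = (n : ℝ) * K := by
    rw [div_eq_iff (ne_of_gt hKpos)] at hn
    have h1 : (q:ℝ) * Real.pi = ((n:ℝ) * K) * Real.pi := by linear_combination hn
    exact mul_right_cancel₀ hpi h1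
  have hqz : q = n * K := by exact_mod_cast hq
  rcases eq_or_ne n 0 with h0 | h0
  · exact hq0 (by simp [hqz, h0])
  · have : (K:ℤ) ≤ |q| := by
      rw [hqz, abs_mul, abs_of_nonneg (by positivity : (0:ℤ) ≤ (K:ℤ))]
      nlinarith [Int.one_le_abs h0, (by positivity : (0:ℤ) < (K:ℤ))]
    omega

theorem stmt14 (K Lr Ls : ℕ) (hK : 1 ≤ K) (hLr : 1 ≤ Lr) (hLs : 1 ≤ Ls)
    (h2 : 2 < Lr + Ls) (hLL : Lr * Ls ≤ K) :
    DXsub K Lr Ls (fun l => (l : ℝ) * Real.pi / K)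
      (fun m => (m : ℝ) * (Lr : ℝ) * Real.pi / K) := by
  have hLrK : (Lr : ℤ) ≤ K := by
    have : Lr ≤ Lr * Ls := Nat.le_mul_of_pos_right _ hLs
    exact_mod_cast this.trans hLL
  have hLL' : (Lr : ℤ) * Ls ≤ K := by exact_mod_cast hLL
  refine ⟨?_, ?_, ?_⟩
  · intro w hw
    have hlt : (w.1 : ℤ) < w.2 := by
      have := (Finset.mem_filter.mp hw).2; exact_mod_cast this
    have hub : (w.2 : ℤ) < Lr := by exact_mod_cast w.2.isLt
    have heq : (fun l : Fin Lr => (l : ℝ) * Real.pi / K) w.2 -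
        (fun l : Fin Lr => (l : ℝ) * Real.pi / K) w.1 =
        (((w.2 : ℤ) - (w.1 : ℤ) : ℤ) : ℝ) * Real.pi / K := by
      push_cast; ring
    rw [heq]
    exact mem_Xstar_of K hK _ (by omega) (by rw [abs_of_pos (by omega)]; omega)
  · intro p hp
    have hlt : (p.1 : ℤ) < p.2 := by
      have := (Finset.mem_filter.mp hp).2; exact_mod_cast this
    have hub : (p.2 : ℤ) < Ls := by exact_mod_cast p.2.isLt
    have heq : (fun m : Fin Ls => (m : ℝ) * Lr * Real.pi / K) p.2 -
        (fun m : Fin Ls => (m : ℝ) * Lr * Real.pi / K) p.1 =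
        ((((p.2 : ℤ) - (p.1 : ℤ)) * Lr : ℤ) : ℝ) * Real.pi / K := by
      push_cast; ring
    rw [heq]
    have hLr0 : (0:ℤ) < Lr := by exact_mod_cast hLr
    have hpos : 0 < ((p.2 : ℤ) - p.1) * Lr := mul_pos (by omega) hLr0
    refine mem_Xstar_of K hK _ (by omega) ?_
    rw [abs_of_pos hpos]
    nlinarith
  · intro w hw p hp
    have hltw : (w.1 : ℤ) < w.2 := by
      have := (Finset.mem_filter.mp hw).2; exact_mod_cast this
    have hubw : (w.2 : ℤ) < Lr := by exact_mod_cast w.2.isLt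
    have hltp : (p.1 : ℤ) < p.2 := by
      have := (Finset.mem_filter.mp hp).2; exact_mod_cast this
    have hubp : (p.2 : ℤ) < Ls := by exact_mod_cast p.2.isLt
    have hLr0 : (0:ℤ) < Lr := by exact_mod_cast hLr
    constructor
    · have heq : ((fun l : Fin Lr => (l : ℝ) * Real.pi / K) w.2 -
          (fun l : Fin Lr => (l : ℝ) * Real.pi / K) w.1) +
          ((fun m : Fin Ls => (m : ℝ) * Lr * Real.pi / K) p.2 -
          (fun m : Fin Ls => (m : ℝ) * Lr * Real.pi / K) p.1) =
          ((((w.2 : ℤ) - w.1) + ((p.2 : ℤ) - p.1) * Lr : ℤ) : ℝ) * Real.pi / K := by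
        push_cast; ring
      rw [heq]
      refine mem_Xstar_of K hK _ ?_ ?_
      · nlinarith
      · rw [abs_of_pos (by nlinarith)]
        nlinarith
    · have heq : ((fun l : Fin Lr => (l : ℝ) * Real.pi / K) w.2 -
          (fun l : Fin Lr => (l : ℝ) * Real.pi / K) w.1) -
          ((fun m : Fin Ls => (m : ℝ) * Lr * Real.pi / K) p.2 -
          (fun m : Fin Ls => (m : ℝ) * Lr * Real.pi / K) p.1) =
          ((((w.2 : ℤ) - w.1) - ((p.2 : ℤ) - p.1) * Lr : ℤ) : ℝ) * Real.pi / K := by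
        push_cast; ring
      rw [heq]
      refine mem_Xstar_of K hK _ ?_ ?_
      · have h1 : (w.2 : ℤ) - w.1 < Lr := by omega
        have h2 : (Lr:ℤ) ≤ ((p.2 : ℤ) - p.1) * Lr := by nlinarith
        omega
      · rw [abs_lt]
        constructor <;> nlinarith
end
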